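/- arXiv:1303.2598 — 8 statements merged into one kernel-verified Lean document; each statement's English description precedes it below -/
import Mathlib

section
/- Let L be a countably infinite scattered linear order. Then the poset ⟨ℙ(L),⊆⟩ is homogeneous: it has a largest element (namely L itself) and for every A ∈ ℙ(L) the poset ⟨ℙ(L),⊆⟩ is order-isomorphic to the poset ⟨{B ∈ ℙ(L) : B ⊆ A},⊆⟩. -/
open Set

/-- A linear order is scattered iff the rationals do not order-embed into it. -/
def IsScattered (L : Type*) [LinearOrder L] : Prop :=
  IsEmpty (ℚ ↪o L)

/-- `Copies L` is the set of all subsets of `L` whose induced order is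
order-isomorphic to `L`. -/
def Copies (L : Type*) [LinearOrder L] : Set (Set L) :=
  { A | Nonempty (↥A ≃o L) }

/-- The separative-modification order `≤*` on subsets of `L`:
`A ≤* B` iff every copy of `L` inside `A` contains a copy of `L` inside `C ∩ B`. -/
def copyLE {L : Type*} [LinearOrder L] (A B : Set L) : Prop :=
  ∀ C ∈ Copies L, C ⊆ A → ∃ D ∈ Copies L, D ⊆ C ∩ B

/-- The separative-modification order on an abstract partial order. -/
def smLE {P : Type*} [PartialOrder P] (p q : P) : Prop :=
  ∀ r ≤ p, ∃ s ≤ r, s ≤ q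

/-- The class ℋ of hereditarily additively indecomposable countable linear
orders, realized as subsets of ℚ (every countable linear order embeds in ℚ):
the smallest class containing the singletons, closed under order-isomorphism,
and closed under ω-sums and ω*-sums of sequences of members satisfying
condition (*) (each member embeds into infinitely many members of the sequence). -/
inductive InH : Set ℚ → Prop
  | singleton (q : ℚ) : InH {q}
  | iso {A B : Set ℚ} : InH A → Nonempty (↥A ≃o ↥B) → InH B
  | omegaSum (M : ℕ → Set ℚ)
      (hne : ∀ i, (M i).Nonempty)
      (hH : ∀ i, InH (M i))
      (hstar : ∀ i, {j | Nonempty (↥(M i) ↪o ↥(M j))}.Infinite)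
      (hlt : ∀ i j, i < j → ∀ x ∈ M i, ∀ y ∈ M j, x < y) :
      InH (⋃ i, M i)
  | omegaStarSum (M : ℕ → Set ℚ)
      (hne : ∀ i, (M i).Nonempty)
      (hH : ∀ i, InH (M i))
      (hstar : ∀ i, {j | Nonempty (↥(M i) ↪o ↥(M j))}.Infinite)
      (hlt : ∀ i j, i < j → ∀ x ∈ M i, ∀ y ∈ M j, y < x) :
      InH (⋃ i, M i)

/-- A subset of a linear order whose induced order belongs to ℋ. -/
def SetInH {L : Type*} [LinearOrder L] (A : Set L) : Prop :=
  ∃ M : Set ℚ, InH M ∧ Nonempty (↥A ≃o ↥M)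

/-- A linear order belonging to ℋ (up to order-isomorphism). -/
def TypeInH (L : Type*) [LinearOrder L] : Prop :=
  ∃ M : Set ℚ, InH M ∧ Nonempty (L ≃o ↥M)

/-- `S` is the ω-sum of the sequence `Li` of members of ℋ satisfying (*):
`S` is the disjoint union of the nonempty sets `Li i`, every element of `Li i`
precedes every element of `Li j` for `i < j`, each `Li i` has induced order in
ℋ, and each `Li i` order-embeds into `Li j` for infinitely many `j`. -/
structure IsOmegaSumH {L : Type*} [LinearOrder L] (S : Set L) (Li : ℕ → Set L) : Prop where
  union : (⋃ i, Li i) = S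
  nonemp : ∀ i, (Li i).Nonempty
  disj : ∀ i j, i ≠ j → Disjoint (Li i) (Li j)
  mono : ∀ i j, i < j → ∀ x ∈ Li i, ∀ y ∈ Li j, x < y
  inH : ∀ i, SetInH (Li i)
  star : ∀ i, {j | Nonempty (↥(Li i) ↪o ↥(Li j))}.Infinite

/-- `S` is the ω*-sum of the sequence `Li` of members of ℋ satisfying (*). -/
structure IsOmegaStarSumH {L : Type*} [LinearOrder L] (S : Set L) (Li : ℕ → Set L) : Prop where
  union : (⋃ i, Li i) = S
  nonemp : ∀ i, (Li i).Nonempty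
  disj : ∀ i j, i ≠ j → Disjoint (Li i) (Li j)
  mono : ∀ i j, i < j → ∀ x ∈ Li i, ∀ y ∈ Li j, y < x
  inH : ∀ i, SetInH (Li i)
  star : ∀ i, {j | Nonempty (↥(Li i) ↪o ↥(Li j))}.Infinite

/-- A partition of a linear order into `k` consecutive convex parts, each of
whose induced orders belongs to ℋ. -/
def HPartitionInH {L : Type*} [LinearOrder L] (k : ℕ) (P : ℕ → Set L) : Prop :=
  (⋃ i < k, P i) = univ ∧ (∀ i < k, (P i).Nonempty) ∧
  (∀ i < k, ∀ j < k, i ≠ j → Disjoint (P i) (P j)) ∧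
  (∀ i < k, ∀ j < k, i < j → ∀ x ∈ P i, ∀ y ∈ P j, x < y) ∧
  (∀ i < k, SetInH (P i))

/-- An order embedding restricts to an order isomorphism onto the image of any set. -/
noncomputable def imageOrderIso {α β : Type*} [Preorder α] [Preorder β] (g : α ↪o β)
    (B : Set α) : ↥B ≃o ↥(g '' B) where
  toEquiv := Equiv.Set.image g B g.injective
  map_rel_iff' := by
    intro a b
    simp [Equiv.Set.image, Equiv.Set.imageOfInjOn, g.le_iff_le]

/-- For a countably infinite scattered linear order `L`, the poset
`⟨ℙ(L), ⊆⟩` is homogeneous: `L` itself is the largest element and the whole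
poset is order-isomorphic to the cone below each of its elements. -/
theorem stmt1 {L : Type*} [LinearOrder L] [Countable L] [Infinite L]
    (hsc : IsScattered L) :
    (univ : Set L) ∈ Copies L ∧
      ∀ A ∈ Copies L,
        Nonempty (↥(Copies L) ≃o ↥{B ∈ Copies L | B ⊆ A}) := by
  constructor
  · exact ⟨OrderIso.Set.univ (α := L)⟩
  · rintro A ⟨e⟩
    -- g : L ↪o L with range A
    let g : L ↪o L := e.symm.toOrderEmbedding.trans (OrderEmbedding.subtype _)
    have hrange : Set.range g = A := by
      ext x
      constructor
      · rintro ⟨y, rfl⟩; exact (e.symm y).2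
      · intro hx; exact ⟨e ⟨x, hx⟩, by simp [g]⟩
    have hcopy : ∀ B : Set L, B ∈ Copies L → g '' B ∈ Copies L := by
      rintro B ⟨f⟩
      exact ⟨(imageOrderIso g B).symm.trans f⟩
    have hcopy' : ∀ C : Set L, C ∈ Copies L → C ⊆ A → g ⁻¹' C ∈ Copies L := by
      rintro C ⟨f⟩ hCA
      have him : g '' (g ⁻¹' C) = C :=
        Set.image_preimage_eq_of_subset (hrange ▸ hCA)
      refine ⟨(imageOrderIso g (g ⁻¹' C)).trans ?_⟩
      exact (OrderIso.setCongr _ _ him).trans f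
    refine ⟨⟨⟨fun B => ⟨g '' B.1, hcopy B.1 B.2, by
        rintro x ⟨y, hy, rfl⟩; rw [← hrange]; exact ⟨y, rfl⟩⟩,
      fun C => ⟨g ⁻¹' C.1, hcopy' C.1 C.2.1 C.2.2⟩, ?_, ?_⟩, ?_⟩⟩
    · intro B
      ext x
      simp [Set.preimage_image_eq _ g.injective]
    · rintro ⟨C, hC, hCA⟩
      ext x
      simp [Set.image_preimage_eq_of_subset (hrange ▸ hCA)]
    · intro B B'
      exact Set.image_subset_image_iff g.injective
end

section
/- Let L be a countably infinite scattered linear order. Then the set ℙ(L) has cardinality exactly 2^ℵ₀ (the continuum). -/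
/-!
The bound `#ℙ(L) ≤ 2 ^ ℵ₀` holds because `ℙ(L)` consists of subsets of a countable set. For the
lower bound, call `a ≈ b` when `[a, b]` is finite (the finite condensation). If some point has
infinitely many points at finite distance on one side, these form a convex block of order type
`ω` (or `ω*`) all of whose infinite subsets have that type too; replacing the block by any of its
`2 ^ ℵ₀` infinite subsets gives pairwise distinct copies of `L`. Otherwise every `≈`-class is
finite; between two inequivalent points there is then a point inequivalent to both, so a set of
representatives of the classes is an infinite dense order, into which `ℚ` embeds, contradicting
scatteredness.
-/

open Set

open Cardinal

section Rank

variable {α : Type*} [LinearOrder α]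

theorem nonempty_orderIso_nat_of_finite_Iic [Infinite α] (h : ∀ x : α, (Iic x).Finite) :
    Nonempty (α ≃o ℕ) := by
  have hrank : StrictMono fun x : α => (Iio x).ncard := fun x y hxy =>
    ncard_lt_ncard (Iio_ssubset_Iio hxy) ((h y).subset Iio_subset_Iic_self)
  have := (infinite_range_of_injective hrank.injective).to_subtype
  exact ⟨(hrank.orderIso _).trans (Nat.Subtype.orderIsoOfNat _).symm⟩

theorem nonempty_orderIso_natDual_of_finite_Ici [Infinite α] (h : ∀ x : α, (Ici x).Finite) :
    Nonempty (α ≃o ℕᵒᵈ) :=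
  let ⟨e⟩ := @nonempty_orderIso_nat_of_finite_Iic αᵒᵈ _ ‹_› h
  ⟨(OrderIso.dualDual α).trans e.dual⟩

end Rank

theorem two_pow_aleph0_le_mk_infinite_subsets {α : Type*} {U : Set α} (hU : U.Infinite) :
    2 ^ ℵ₀ ≤ #{T : Set α // T ⊆ U ∧ T.Infinite} := by
  set f : ℕ → α := fun n => hU.natEmbedding _ n
  have hf : Function.Injective f := Subtype.val_injective.comp (hU.natEmbedding _).injective
  -- the odd numbers make `code S` infinite, the even ones recover `S`
  set code : Set ℕ → Set ℕ := fun S => {n | Odd n ∨ n / 2 ∈ S}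
  have hcode_inj : Function.Injective code := fun S S' h => by
    ext k
    have : 2 * k ∈ code S ↔ 2 * k ∈ code S' := by rw [h]
    simpa [code, Nat.not_odd_iff_even.2 (even_two_mul k)] using this
  have hcode_inf (S : Set ℕ) : (code S).Infinite :=
    (infinite_range_of_injective fun m n (h : 2 * m + 1 = 2 * n + 1) => by omega).mono
      (by rintro _ ⟨n, rfl⟩; exact Or.inl (odd_two_mul_add_one n))
  let F : Set ℕ → {T : Set α // T ⊆ U ∧ T.Infinite} := fun S =>
    ⟨f '' code S, image_subset_iff.2 fun n _ => (hU.natEmbedding _ n).2,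
      (hcode_inf S).image hf.injOn⟩
  have hF : Function.Injective F := fun S S' h =>
    hcode_inj (image_injective.2 hf (congrArg Subtype.val h))
  simpa [mk_set] using lift_mk_le_lift_mk_of_injective hF

section Copies

variable {L : Type*} [LinearOrder L]

theorem mk_copies_le_two_pow_aleph0 [Countable L] : #(Copies L) ≤ 2 ^ ℵ₀ :=
  calc #(Copies L) ≤ #(Set L) := mk_set_le _
    _ = 2 ^ #L := mk_set
    _ ≤ 2 ^ ℵ₀ := power_le_power_left two_ne_zero mk_le_aleph0

theorem union_compl_mem_copies {C C' : Set L} (hC : C.OrdConnected) (hC' : C' ⊆ C)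
    (e : C ≃o C') : C' ∪ Cᶜ ∈ Copies L := by
  classical
  let φ : L → ↥(C' ∪ Cᶜ) := fun x =>
    if hx : x ∈ C then ⟨e ⟨x, hx⟩, Or.inl (e ⟨x, hx⟩).2⟩ else ⟨x, Or.inr hx⟩
  have hφ : StrictMono φ := by
    intro x y hxy
    simp only [φ]
    split_ifs with hx hy hy
    · exact e.strictMono hxy
    · by_contra! hyx
      exact hy (hC.out hx (hC' (e ⟨x, hx⟩).2) ⟨hxy.le, hyx⟩)
    · by_contra! hyx
      exact hx (hC.out (hC' (e ⟨y, hy⟩).2) hy ⟨hyx, hxy.le⟩)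
    · exact hxy
  have hφ_surj : Function.Surjective φ := by
    rintro ⟨z, hz | hz⟩
    · refine ⟨e.symm ⟨z, hz⟩, ?_⟩
      simp [φ]
    · exact ⟨z, by simp [φ, show z ∉ C from hz]⟩
  exact ⟨(hφ.orderIsoOfSurjective φ hφ_surj).symm⟩

theorem two_pow_aleph0_le_mk_copies_of_ordConnected {U : Set L} (hU : U.OrdConnected)
    (hinf : U.Infinite) (hiso : ∀ T ⊆ U, T.Infinite → Nonempty (T ≃o U)) :
    2 ^ ℵ₀ ≤ #(Copies L) := by
  let F : {T : Set L // T ⊆ U ∧ T.Infinite} → Copies L := fun T =>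
    ⟨T.1 ∪ Uᶜ, union_compl_mem_copies hU T.2.1 (hiso T.1 T.2.1 T.2.2).some.symm⟩
  have hrestrict : ∀ T ⊆ U, (T ∪ Uᶜ) ∩ U = T := fun T hT => by
    rw [union_inter_distrib_right, compl_inter_self, union_empty, inter_eq_left.2 hT]
  have hF : Function.Injective F := by
    rintro ⟨T, hTU, _⟩ ⟨T', hT'U, _⟩ hTT'
    have h : T ∪ Uᶜ = T' ∪ Uᶜ := congrArg Subtype.val hTT'
    exact Subtype.ext <| (hrestrict T hTU).symm.trans (h ▸ hrestrict T' hT'U)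
  exact (two_pow_aleph0_le_mk_infinite_subsets hinf).trans (mk_le_of_injective hF)

end Copies

section Condensation

variable {L : Type*} [LinearOrder L]

theorem two_pow_aleph0_le_mk_copies_of_infinite_Icc_finite_right (a : L)
    (h : {y | a ≤ y ∧ (Icc a y).Finite}.Infinite) : 2 ^ ℵ₀ ≤ #(Copies L) := by
  set U := {y | a ≤ y ∧ (Icc a y).Finite}
  have hω : ∀ T ⊆ U, T.Infinite → Nonempty (T ≃o ℕ) := fun T hTU hT =>
    have := hT.to_subtype
    nonempty_orderIso_nat_of_finite_Iic fun x =>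
      ((hTU x.2).2.preimage Subtype.val_injective.injOn).subset fun y hy => ⟨(hTU y.2).1, hy⟩
  refine two_pow_aleph0_le_mk_copies_of_ordConnected ⟨?_⟩ h fun T hTU hT => ?_
  · rintro x hx y hy z ⟨hxz, hzy⟩
    exact ⟨hx.1.trans hxz, hy.2.subset (Icc_subset_Icc_right hzy)⟩
  · obtain ⟨e⟩ := hω T hTU hT
    obtain ⟨f⟩ := hω U subset_rfl h
    exact ⟨e.trans f.symm⟩

theorem two_pow_aleph0_le_mk_copies_of_infinite_Icc_finite_left (a : L)
    (h : {y | y ≤ a ∧ (Icc y a).Finite}.Infinite) : 2 ^ ℵ₀ ≤ #(Copies L) := by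
  set U := {y | y ≤ a ∧ (Icc y a).Finite}
  have hω : ∀ T ⊆ U, T.Infinite → Nonempty (T ≃o ℕᵒᵈ) := fun T hTU hT =>
    have := hT.to_subtype
    nonempty_orderIso_natDual_of_finite_Ici fun x =>
      ((hTU x.2).2.preimage Subtype.val_injective.injOn).subset fun y hy => ⟨hy, (hTU y.2).1⟩
  refine two_pow_aleph0_le_mk_copies_of_ordConnected ⟨?_⟩ h fun T hTU hT => ?_
  · rintro x hx y hy z ⟨hxz, hzy⟩
    exact ⟨hzy.trans hy.1, hx.2.subset (Icc_subset_Icc_left hxz)⟩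
  · obtain ⟨e⟩ := hω T hTU hT
    obtain ⟨f⟩ := hω U subset_rfl h
    exact ⟨e.trans f.symm⟩

variable (L) in
def finiteCondensation : Setoid L where
  r a b := (uIcc a b).Finite
  iseqv :=
    { refl a := by simp
      symm {a b} h := uIcc_comm a b ▸ h
      trans hab hbc := (hab.union hbc).subset uIcc_subset_uIcc_union_uIcc }

theorem finiteCondensation_of_mem_uIcc {a b c : L} (hb : b ∈ uIcc a c)
    (hac : finiteCondensation L a c) : finiteCondensation L a b :=
  hac.subset (uIcc_subset_uIcc_left hb)

theorem finite_setOf_finiteCondensation {a : L} (hright : {y | a ≤ y ∧ (Icc a y).Finite}.Finite)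
    (hleft : {y | y ≤ a ∧ (Icc y a).Finite}.Finite) : {b | finiteCondensation L a b}.Finite := by
  refine (hright.union hleft).subset fun b (hb : (uIcc a b).Finite) => ?_
  rcases le_total a b with hab | hba
  · exact Or.inl ⟨hab, uIcc_of_le hab ▸ hb⟩
  · exact Or.inr ⟨hba, uIcc_of_ge hba ▸ hb⟩

theorem exists_between_not_finiteCondensation {a c : L} (hac : ¬finiteCondensation L a c)
    (ha : {b | finiteCondensation L a b}.Finite) (hc : {b | finiteCondensation L c b}.Finite) :
    ∃ b ∈ uIcc a c, ¬finiteCondensation L a b ∧ ¬finiteCondensation L c b := by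
  by_contra! h
  exact hac ((ha.union hc).subset fun b hb => (em _).imp_right (h b hb))

theorem nonempty_rat_orderEmbedding_of_finite_setOf_finiteCondensation [Infinite L]
    (h : ∀ a, {b | finiteCondensation L a b}.Finite) : Nonempty (ℚ ↪o L) := by
  let rep : L → L := fun x => (Quotient.mk (finiteCondensation L) x).out
  have hrep (x : L) : finiteCondensation L (rep x) x := Quotient.mk_out x
  -- one representative per class; these form an infinite dense suborder
  set S := range rep
  have hS_eq {s t : L} (hs : s ∈ S) (ht : t ∈ S) (hst : finiteCondensation L s t) : s = t := by
    obtain ⟨x, rfl⟩ := hs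
    obtain ⟨y, rfl⟩ := ht
    have hxy := Quotient.sound (s := finiteCondensation L) hst
    simp only [rep, Quotient.out_eq] at hxy
    simp only [rep, hxy]
  have hS_inf : S.Infinite := fun hS =>
    infinite_univ ((hS.biUnion fun s _ => h s).subset fun x _ => mem_biUnion ⟨x, rfl⟩ (hrep x))
  have : DenselyOrdered S := by
    refine ⟨?_⟩
    rintro ⟨s, hs⟩ ⟨t, ht⟩ (hst : s < t)
    obtain ⟨b, hb, hsb, htb⟩ := exists_between_not_finiteCondensation
      (fun hst' => hst.ne (hS_eq hs ht hst')) (h s) (h t)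
    rw [uIcc_of_le hst.le] at hb
    have hb_rep := (finiteCondensation L).symm' (hrep b)
    refine ⟨⟨rep b, b, rfl⟩, lt_of_not_ge fun hbs => hsb ?_, lt_of_not_ge fun htb' => htb ?_⟩
    · exact (finiteCondensation L).symm' <|
        finiteCondensation_of_mem_uIcc (mem_uIcc.2 (.inr ⟨hbs, hb.1⟩)) hb_rep
    · exact (finiteCondensation L).symm' <|
        finiteCondensation_of_mem_uIcc (mem_uIcc.2 (.inl ⟨hb.2, htb'⟩)) hb_rep
  have := hS_inf.to_subtype
  obtain ⟨e⟩ := Order.embedding_from_countable_to_dense ℚ S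
  exact ⟨e.trans (OrderEmbedding.subtype _)⟩

end Condensation

/-- For a countably infinite scattered linear order `L`, the set
`ℙ(L)` has cardinality exactly `2 ^ ℵ₀` (the continuum). -/
theorem stmt3 {L : Type*} [LinearOrder L] [Countable L] [Infinite L]
    (hsc : IsScattered L) :
    Cardinal.mk ↥(Copies L) = 2 ^ Cardinal.aleph0 := by
  refine le_antisymm mk_copies_le_two_pow_aleph0 ?_
  by_cases hright : ∃ a : L, {y | a ≤ y ∧ (Icc a y).Finite}.Infinite
  · obtain ⟨a, ha⟩ := hright
    exact two_pow_aleph0_le_mk_copies_of_infinite_Icc_finite_right a ha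
  by_cases hleft : ∃ a : L, {y | y ≤ a ∧ (Icc y a).Finite}.Infinite
  · obtain ⟨a, ha⟩ := hleft
    exact two_pow_aleph0_le_mk_copies_of_infinite_Icc_finite_left a ha
  simp only [not_exists, not_infinite] at hright hleft
  obtain ⟨e⟩ := nonempty_rat_orderEmbedding_of_finite_setOf_finiteCondensation fun a =>
    finite_setOf_finiteCondensation (hright a) (hleft a)
  exact hsc.elim e
end

section
/- Every countably infinite linear order L belonging to the class ℋ contains two disjoint subsets X and Y, each of whose induced orders is order-isomorphic to L. -/
open Set

section Helpers

variable {α γ : Type*} [LinearOrder α] [LinearOrder γ]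

/-- Restrict a strictly monotone map on `↥A` to a subset `X ⊆ A`. -/
noncomputable def restrictIso {A : Set α} (X : Set α) (hXA : X ⊆ A)
    (ψ : ↥A → γ) (hψ : StrictMono ψ) :
    ↥X ≃o ↥(Set.range (fun q : ↥X => ψ ⟨↑q, hXA q.2⟩)) :=
  StrictMono.orderIso _ (fun q q' h => hψ (Subtype.mk_lt_mk.2 h))

end Helpers

/-- Pieces of an ω-sum (or ω*-sum) are pairwise disjoint. -/
lemma pieces_disjoint (M : ℕ → Set ℚ)
    (hlt : ∀ i j, i < j → ∀ x ∈ M i, ∀ y ∈ M j, x < y ∨ y < x) :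
    ∀ i j, i ≠ j → Disjoint (M i) (M j) := by
  intro i j hij
  rw [Set.disjoint_left]
  intro x hxi hxj
  rcases hij.lt_or_gt with h | h
  · rcases hlt i j h x hxi x hxj with h' | h' <;> exact lt_irrefl x h'
  · rcases hlt j i h x hxj x hxi with h' | h' <;> exact lt_irrefl x h'

/-- Core construction: embed the sum `⋃ i, M i` as a copy inside `⋃ i, M (σ i)`. -/
lemma sum_copy (M : ℕ → Set ℚ) (σ : ℕ → ℕ)
    (f : ∀ i, ↥(M i) ↪o ↥(M (σ i)))
    (hsep : ∀ i j, i ≠ j → ∀ x ∈ M i, ∀ y ∈ M j, x < y →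
      ∀ u ∈ M (σ i), ∀ v ∈ M (σ j), u < v) :
    ∃ X : Set ℚ, X ⊆ (⋃ i, M (σ i)) ∧ Nonempty (↥(⋃ i, M i) ≃o ↥X) := by
  have hmem : ∀ x : ↥(⋃ i, M i), ∃ i, (x : ℚ) ∈ M i := by
    intro x
    exact Set.mem_iUnion.1 x.2
  choose idx hidx using hmem
  set φ : ↥(⋃ i, M i) → ℚ := fun x => ↑(f (idx x) ⟨↑x, hidx x⟩) with hφdef
  have hφ : StrictMono φ := by
    intro x y hxy
    have hxy' : (x : ℚ) < (y : ℚ) := hxy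
    by_cases h : idx x = idx y
    · have hx' : (x : ℚ) ∈ M (idx y) := h ▸ hidx x
      have hlt2 : (⟨↑x, hx'⟩ : ↥(M (idx y))) < ⟨↑y, hidx y⟩ := Subtype.mk_lt_mk.2 hxy'
      have := (f (idx y)).strictMono hlt2
      have hv : ((f (idx y) ⟨↑x, hx'⟩ : ↥(M (σ (idx y)))) : ℚ)
          < ((f (idx y) ⟨↑y, hidx y⟩ : ↥(M (σ (idx y)))) : ℚ) := this
      have hcongr : ∀ (i j : ℕ) (h : i = j) (hx : (x : ℚ) ∈ M i) (hx2 : (x : ℚ) ∈ M j),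
          (↑(f i ⟨↑x, hx⟩) : ℚ) = ↑(f j ⟨↑x, hx2⟩) := by
        rintro i _ rfl hx hx2; rfl
      have : φ x = ↑(f (idx y) ⟨↑x, hx'⟩) := hcongr _ _ h _ _
      rw [this]
      exact hv
    · exact hsep (idx x) (idx y) h ↑x (hidx x) ↑y (hidx y) hxy'
        _ (f (idx x) ⟨↑x, hidx x⟩).2 _ (f (idx y) ⟨↑y, hidx y⟩).2
  refine ⟨Set.range φ, ?_, ⟨hφ.orderIso φ⟩⟩
  rintro _ ⟨x, rfl⟩
  exact Set.mem_iUnion.2 ⟨idx x, (f (idx x) ⟨↑x, hidx x⟩).2⟩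

/-- Build the two disjoint strictly increasing index sequences. -/
lemma pick_indices (S : ℕ → Set ℕ) (hS : ∀ i, (S i).Infinite) :
    ∃ c : ℕ → ℕ, StrictMono c ∧ ∀ n, c n ∈ S (n / 2) := by
  have hpick : ∀ (i n : ℕ), ∃ m ∈ S i, n < m := fun i n => (hS i).exists_gt n
  choose g hg1 hg2 using hpick
  refine ⟨fun n => Nat.rec (g 0 0) (fun n prev => g ((n + 1) / 2) prev) n, ?_, ?_⟩
  · apply strictMono_nat_of_lt_succ
    intro n
    exact hg2 _ _
  · intro n
    cases n with
    | zero => exact hg1 0 0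
    | succ m => exact hg1 _ _

lemma two_copies {M : Set ℚ} (h : InH M) :
    M.Finite ∨ ∃ X Y : Set ℚ, X ⊆ M ∧ Y ⊆ M ∧ Disjoint X Y ∧
      Nonempty (↥X ≃o ↥M) ∧ Nonempty (↥Y ≃o ↥M) := by
  induction h with
  | singleton q => exact Or.inl (Set.finite_singleton q)
  | @iso A B hA hAB ih =>
    obtain ⟨e⟩ := hAB
    rcases ih with hfin | ⟨X, Y, hXA, hYA, hdisj, ⟨eX⟩, ⟨eY⟩⟩
    · left
      have : Finite ↥A := hfin.to_subtype
      have : Finite ↥B := Finite.of_equiv _ e.toEquiv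
      exact Set.finite_coe_iff.1 this
    · right
      set ψ : ↥A → ℚ := fun a => ↑(e a) with hψdef
      have hψ : StrictMono ψ := fun a b h => Subtype.coe_lt_coe.2 (e.strictMono h)
      refine ⟨Set.range (fun q : ↥X => ψ ⟨↑q, hXA q.2⟩),
              Set.range (fun q : ↥Y => ψ ⟨↑q, hYA q.2⟩), ?_, ?_, ?_, ?_, ?_⟩
      · rintro _ ⟨q, rfl⟩; exact (e ⟨↑q, hXA q.2⟩).2
      · rintro _ ⟨q, rfl⟩; exact (e ⟨↑q, hYA q.2⟩).2
      · rw [Set.disjoint_left]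
        rintro _ ⟨qx, rfl⟩ ⟨qy, hqy⟩
        have := hψ.injective hqy.symm
        have hval : (qx : ℚ) = (qy : ℚ) := congrArg Subtype.val this
        exact Set.disjoint_left.1 hdisj qx.2 (hval ▸ qy.2)
      · exact ⟨(restrictIso X hXA ψ hψ).symm.trans (eX.trans e)⟩
      · exact ⟨(restrictIso Y hYA ψ hψ).symm.trans (eY.trans e)⟩
  | omegaSum M hne hH hstar hlt ih =>
    right
    obtain ⟨c, hc, hcS⟩ := pick_indices _ hstar
    have ha : ∀ i, Nonempty (↥(M i) ↪o ↥(M (c (2 * i)))) := by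
      intro i; have := hcS (2 * i); rwa [show 2 * i / 2 = i by omega] at this
    have hb : ∀ i, Nonempty (↥(M i) ↪o ↥(M (c (2 * i + 1)))) := by
      intro i; have := hcS (2 * i + 1); rwa [show (2 * i + 1) / 2 = i by omega] at this
    have hdisjM : ∀ i j, i ≠ j → Disjoint (M i) (M j) :=
      pieces_disjoint M (fun i j hij x hx y hy => Or.inl (hlt i j hij x hx y hy))
    have hsep : ∀ σ : ℕ → ℕ, StrictMono σ → ∀ i j, i ≠ j → ∀ x ∈ M i, ∀ y ∈ M j, x < y →
        ∀ u ∈ M (σ i), ∀ v ∈ M (σ j), u < v := by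
      intro σ hσ i j hij x hx y hy hxy u hu v hv
      have hij' : i < j := by
        rcases hij.lt_or_gt with h | h
        · exact h
        · exact absurd hxy (not_lt.2 (le_of_lt (hlt j i h y hy x hx)))
      exact hlt (σ i) (σ j) (hσ hij') u hu v hv
    have hamono : StrictMono (fun i => c (2 * i)) := fun i j h => hc (by omega)
    have hbmono : StrictMono (fun i => c (2 * i + 1)) := fun i j h => hc (by omega)
    obtain ⟨X, hXsub, ⟨eX⟩⟩ :=
      sum_copy M (fun i => c (2 * i)) (fun i => (ha i).some) (hsep _ hamono)
    obtain ⟨Y, hYsub, ⟨eY⟩⟩ :=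
      sum_copy M (fun i => c (2 * i + 1)) (fun i => (hb i).some) (hsep _ hbmono)
    refine ⟨X, Y, ?_, ?_, ?_, ⟨eX.symm⟩, ⟨eY.symm⟩⟩
    · exact hXsub.trans (Set.iUnion_subset fun i => Set.subset_iUnion M _)
    · exact hYsub.trans (Set.iUnion_subset fun i => Set.subset_iUnion M _)
    · rw [Set.disjoint_left]
      intro z hzX hzY
      obtain ⟨i, hzi⟩ := Set.mem_iUnion.1 (hXsub hzX)
      obtain ⟨j, hzj⟩ := Set.mem_iUnion.1 (hYsub hzY)
      exact Set.disjoint_left.1 (hdisjM _ _ (fun h => by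
        have := hc.injective h; omega)) hzi hzj
  | omegaStarSum M hne hH hstar hlt ih =>
    right
    obtain ⟨c, hc, hcS⟩ := pick_indices _ hstar
    have ha : ∀ i, Nonempty (↥(M i) ↪o ↥(M (c (2 * i)))) := by
      intro i; have := hcS (2 * i); rwa [show 2 * i / 2 = i by omega] at this
    have hb : ∀ i, Nonempty (↥(M i) ↪o ↥(M (c (2 * i + 1)))) := by
      intro i; have := hcS (2 * i + 1); rwa [show (2 * i + 1) / 2 = i by omega] at this
    have hdisjM : ∀ i j, i ≠ j → Disjoint (M i) (M j) :=
      pieces_disjoint M (fun i j hij x hx y hy => Or.inr (hlt i j hij x hx y hy))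
    have hsep : ∀ σ : ℕ → ℕ, StrictMono σ → ∀ i j, i ≠ j → ∀ x ∈ M i, ∀ y ∈ M j, x < y →
        ∀ u ∈ M (σ i), ∀ v ∈ M (σ j), u < v := by
      intro σ hσ i j hij x hx y hy hxy u hu v hv
      have hij' : j < i := by
        rcases hij.lt_or_gt with h | h
        · exact absurd hxy (not_lt.2 (le_of_lt (hlt i j h x hx y hy)))
        · exact h
      exact hlt (σ j) (σ i) (hσ hij') v hv u hu
    have hamono : StrictMono (fun i => c (2 * i)) := fun i j h => hc (by omega)
    have hbmono : StrictMono (fun i => c (2 * i + 1)) := fun i j h => hc (by omega)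
    obtain ⟨X, hXsub, ⟨eX⟩⟩ :=
      sum_copy M (fun i => c (2 * i)) (fun i => (ha i).some) (hsep _ hamono)
    obtain ⟨Y, hYsub, ⟨eY⟩⟩ :=
      sum_copy M (fun i => c (2 * i + 1)) (fun i => (hb i).some) (hsep _ hbmono)
    refine ⟨X, Y, ?_, ?_, ?_, ⟨eX.symm⟩, ⟨eY.symm⟩⟩
    · exact hXsub.trans (Set.iUnion_subset fun i => Set.subset_iUnion M _)
    · exact hYsub.trans (Set.iUnion_subset fun i => Set.subset_iUnion M _)
    · rw [Set.disjoint_left]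
      intro z hzX hzY
      obtain ⟨i, hzi⟩ := Set.mem_iUnion.1 (hXsub hzX)
      obtain ⟨j, hzj⟩ := Set.mem_iUnion.1 (hYsub hzY)
      exact Set.disjoint_left.1 (hdisjM _ _ (fun h => by
        have := hc.injective h; omega)) hzi hzj

/-- A countably infinite linear order belonging to ℋ contains two
disjoint copies of itself. -/
theorem stmt6 {L : Type*} [LinearOrder L] [Countable L] [Infinite L]
    (hH : TypeInH L) :
    ∃ X Y : Set L, Disjoint X Y ∧ X ∈ Copies L ∧ Y ∈ Copies L := by
  obtain ⟨M, hM, ⟨e⟩⟩ := hH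
  have hMinf : Infinite ↥M := Infinite.of_injective e e.injective
  rcases two_copies hM with hfin | ⟨X, Y, hXM, hYM, hdisj, ⟨eX⟩, ⟨eY⟩⟩
  · exact absurd hfin (Set.infinite_coe_iff.1 hMinf)
  · set ψX : ↥X → L := fun q => e.symm ⟨↑q, hXM q.2⟩ with hψXdef
    set ψY : ↥Y → L := fun q => e.symm ⟨↑q, hYM q.2⟩ with hψYdef
    have hψX : StrictMono ψX := fun a b h => e.symm.strictMono (Subtype.mk_lt_mk.2 h)
    have hψY : StrictMono ψY := fun a b h => e.symm.strictMono (Subtype.mk_lt_mk.2 h)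
    refine ⟨Set.range ψX, Set.range ψY, ?_,
      ⟨(hψX.orderIso ψX).symm.trans (eX.trans e.symm)⟩,
      ⟨(hψY.orderIso ψY).symm.trans (eY.trans e.symm)⟩⟩
    rw [Set.disjoint_left]
    rintro _ ⟨qx, rfl⟩ ⟨qy, hqy⟩
    have h1 := e.symm.injective hqy
    have hval : (qy : ℚ) = (qx : ℚ) := congrArg Subtype.val h1
    exact Set.disjoint_left.1 hdisj qx.2 (hval ▸ qy.2)
end

section
/- Let L be a countable linear order that is the ω-sum of a sequence ⟨L_i : i∈ω⟩ of members of ℋ satisfying condition (*). Then a subset A ⊆ L contains a subset whose induced order is order-isomorphic to L if and only if for all i, m ∈ ω there exists a finite set K ⊆ ω∖m such that L_i order-embeds into A ∩ ⋃_{j∈K} L_j (with the induced order). -/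
open Set

section StmtEightHelpers

private lemma stabOfAntitone (f : ℕ → ℕ) (hf : ∀ n, f (n+1) ≤ f n) :
    ∃ N, ∀ n, N ≤ n → f n = f N := by
  have hanti : Antitone f := antitone_nat_of_succ_le hf
  obtain ⟨N, hN⟩ : ∃ N, ∀ n, f N ≤ f n := by
    obtain ⟨N, hN⟩ := Nat.sInf_mem (⟨f 0, 0, rfl⟩ : (Set.range f).Nonempty)
    exact ⟨N, fun n => hN ▸ Nat.sInf_le ⟨n, rfl⟩⟩
  exact ⟨N, fun n hn => le_antisymm (hanti hn) (hN n)⟩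

private lemma stabOfMonotoneBdd (f : ℕ → ℕ) (hf : ∀ n, f n ≤ f (n+1)) (q : ℕ)
    (hq : ∀ n, f n ≤ q) : ∃ N, ∀ n, N ≤ n → f n = f N := by
  obtain ⟨N, hN⟩ := stabOfAntitone (fun n => q - f n) (fun n => Nat.sub_le_sub_left (hf n) q)
  refine ⟨N, fun n hn => ?_⟩
  have h1 := hN n hn
  have h2 := hq n
  have h3 := hq N
  omega

private lemma existsIdx {α : Type*} (M : ℕ → Set α)
    (hdisj : ∀ i j, i ≠ j → ∀ x, x ∈ M i → x ∈ M j → False) :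
    ∃ idx : ↥(⋃ i, M i) → ℕ, (∀ x, (x : α) ∈ M (idx x)) ∧
      ∀ (x : ↥(⋃ i, M i)) i, (x : α) ∈ M i → idx x = i := by
  have hmem : ∀ x : ↥(⋃ i, M i), ∃ i, (x : α) ∈ M i := fun x => mem_iUnion.mp x.2
  choose idx hidx using hmem
  refine ⟨idx, hidx, fun x i hx => ?_⟩
  by_contra hne
  exact hdisj _ _ hne _ (hidx x) hx

/-- Key lemma: no member of ℋ admits an ω-stacked sequence of self-embeddings. -/
private theorem InH.noStack {M : Set ℚ} (hM : InH M) :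
    ∀ e : ℕ → (↥M ↪o ↥M), ¬ (∀ n (x y : ↥M), e n x < e (n+1) y) := by
  induction hM with
  | singleton q =>
      intro e hstk
      have x : ↥({q} : Set ℚ) := ⟨q, rfl⟩
      have h01 : e 0 x = e 1 x := Subtype.ext (by
        have h0 : ((e 0 x : ↥({q} : Set ℚ)) : ℚ) = q := (e 0 x).2
        have h1 : ((e 1 x : ↥({q} : Set ℚ)) : ℚ) = q := (e 1 x).2
        rw [h0, h1])
      exact absurd (hstk 0 x x) (by rw [h01]; exact lt_irrefl _)
  | iso h1 h2 ih =>
      intro e hstk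
      obtain ⟨φ⟩ := h2
      refine ih (fun n => (φ.toOrderEmbedding.trans (e n)).trans φ.symm.toOrderEmbedding) ?_
      intro n x y
      simp only [RelEmbedding.trans_apply]
      exact φ.symm.strictMono (hstk n (φ.toOrderEmbedding x) (φ.toOrderEmbedding y))
  | omegaSum M hne hH hstar hlt ih =>
      intro e hstk
      have hdisj : ∀ i j, i ≠ j → ∀ x, x ∈ M i → x ∈ M j → False := by
        intro i j hij x hxi hxj
        rcases lt_or_gt_of_ne hij with hh | hh
        · exact lt_irrefl x (hlt i j hh x hxi x hxj)
        · exact lt_irrefl x (hlt j i hh x hxj x hxi)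
      obtain ⟨idx, hidx, huniq⟩ := existsIdx M hdisj
      have hidxmono : ∀ x y : ↥(⋃ i, M i), x < y → idx x ≤ idx y := by
        intro x y hxy
        by_contra hcon
        push_neg at hcon
        have := hlt _ _ hcon _ (hidx y) _ (hidx x)
        exact absurd (Subtype.coe_lt_coe.mpr hxy) (not_lt.mpr this.le)
      choose mp hmp using hne
      have hmpU : ∀ p, mp p ∈ ⋃ i, M i := fun p => mem_iUnion.mpr ⟨p, hmp p⟩
      have hmUlt : ∀ p q', p < q' →
          (⟨mp p, hmpU p⟩ : ↥(⋃ i, M i)) < ⟨mp q', hmpU q'⟩ :=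
        fun p q' hpq => Subtype.mk_lt_mk.mpr (hlt p q' hpq _ (hmp p) _ (hmp q'))
      set c : ℕ → ℕ := fun p => idx (e 0 ⟨mp p, hmpU p⟩) with hc
      have hcmono : ∀ p, c p ≤ c (p+1) :=
        fun p => hidxmono _ _ ((e 0).strictMono (hmUlt p (p+1) (lt_add_one p)))
      have hcbdd : ∀ p, c p ≤ idx (e 1 ⟨mp 0, hmpU 0⟩) :=
        fun p => hidxmono _ _ (hstk 0 _ _)
      obtain ⟨N, hN⟩ := stabOfMonotoneBdd c hcmono _ hcbdd
      have hkey : ∀ p, N + 1 ≤ p → ∀ x : ↥(⋃ i, M i), (x : ℚ) ∈ M p →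
          ((e 0 x : ↥(⋃ i, M i)) : ℚ) ∈ M (c N) := by
        intro p hp x hx
        have h1 : (⟨mp N, hmpU N⟩ : ↥(⋃ i, M i)) < x :=
          Subtype.mk_lt_mk.mpr (hlt N p (by omega) _ (hmp N) _ hx)
        have h2 : x < ⟨mp (p+1), hmpU (p+1)⟩ :=
          Subtype.mk_lt_mk.mpr (hlt p (p+1) (lt_add_one p) _ hx _ (hmp (p+1)))
        have l1 : c N ≤ idx (e 0 x) := hidxmono _ _ ((e 0).strictMono h1)
        have l2 : idx (e 0 x) ≤ c N := by
          have h3 := hidxmono _ _ ((e 0).strictMono h2)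
          have h4 : c (p+1) = c N := hN (p+1) (by omega)
          exact le_trans h3 (le_of_eq h4)
        have hEq : idx (e 0 x) = c N := le_antisymm l2 l1
        rw [← hEq]
        exact hidx _
      have hpinf : {j | Nonempty (↥(M (c N)) ↪o ↥(M j))}.Infinite := hstar (c N)
      set jn : ℕ → ℕ := fun n => Nat.nth (fun j => Nonempty (↥(M (c N)) ↪o ↥(M j))) (n + (N+1))
        with hjn
      have hjmem : ∀ n, Nonempty (↥(M (c N)) ↪o ↥(M (jn n))) :=
        fun n => Nat.nth_mem_of_infinite hpinf _
      have hjlt : ∀ n, jn n < jn (n+1) := fun n => Nat.nth_strictMono hpinf (by omega)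
      have hjge : ∀ n, N + 1 ≤ jn n := by
        intro n
        have hle := (Nat.nth_strictMono hpinf).id_le (n + (N+1))
        simp only [id_eq] at hle
        exact le_trans (Nat.le_add_left (N+1) n) hle
      have hε : ∀ n, ∃ ε : ↥(M (c N)) ↪o ↥(M (jn n)), True := fun n => ⟨(hjmem n).some, trivial⟩
      choose ε _ using hε
      have hmemU : ∀ n (x : ↥(M (c N))), ((ε n x : ↥(M (jn n))) : ℚ) ∈ ⋃ i, M i :=
        fun n x => mem_iUnion.mpr ⟨jn n, (ε n x).2⟩
      set F : ∀ _ : ℕ, ↥(M (c N)) → ↥(M (c N)) := fun n x =>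
        ⟨((e 0 ⟨((ε n x : ↥(M (jn n))) : ℚ), hmemU n x⟩ : ↥(⋃ i, M i)) : ℚ),
          hkey (jn n) (hjge n) _ (ε n x).2⟩ with hF
      have hFsm : ∀ n, StrictMono (F n) := by
        intro n x y hxy
        have h1 : (⟨((ε n x : ↥(M (jn n))) : ℚ), hmemU n x⟩ : ↥(⋃ i, M i)) <
            ⟨((ε n y : ↥(M (jn n))) : ℚ), hmemU n y⟩ :=
          Subtype.mk_lt_mk.mpr (Subtype.coe_lt_coe.mpr ((ε n).strictMono hxy))
        exact Subtype.mk_lt_mk.mpr (Subtype.coe_lt_coe.mpr ((e 0).strictMono h1))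
      refine ih (c N) (fun n => OrderEmbedding.ofStrictMono (F n) (hFsm n)) ?_
      intro n x y
      show F n x < F (n+1) y
      have h1 : (⟨((ε n x : ↥(M (jn n))) : ℚ), hmemU n x⟩ : ↥(⋃ i, M i)) <
          ⟨((ε (n+1) y : ↥(M (jn (n+1)))) : ℚ), hmemU (n+1) y⟩ :=
        Subtype.mk_lt_mk.mpr (hlt (jn n) (jn (n+1)) (hjlt n) _ (ε n x).2 _ (ε (n+1) y).2)
      exact Subtype.mk_lt_mk.mpr (Subtype.coe_lt_coe.mpr ((e 0).strictMono h1))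
  | omegaStarSum M hne hH hstar hlt ih =>
      intro e hstk
      have hdisj : ∀ i j, i ≠ j → ∀ x, x ∈ M i → x ∈ M j → False := by
        intro i j hij x hxi hxj
        rcases lt_or_gt_of_ne hij with hh | hh
        · exact lt_irrefl x (hlt i j hh x hxi x hxj)
        · exact lt_irrefl x (hlt j i hh x hxj x hxi)
      obtain ⟨idx, hidx, huniq⟩ := existsIdx M hdisj
      have hidxanti : ∀ x y : ↥(⋃ i, M i), x < y → idx y ≤ idx x := by
        intro x y hxy
        by_contra hcon
        push_neg at hcon
        have := hlt _ _ hcon _ (hidx x) _ (hidx y)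
        exact absurd (Subtype.coe_lt_coe.mpr hxy) (not_lt.mpr this.le)
      obtain ⟨u0, hu0⟩ := hne 0
      have hu0U : u0 ∈ ⋃ i, M i := mem_iUnion.mpr ⟨0, hu0⟩
      set m0 : ↥(⋃ i, M i) := ⟨u0, hu0U⟩ with hm0
      set a : ℕ → ℕ := fun n => idx (e n m0) with ha
      have hastep : ∀ n, a (n+1) ≤ a n := fun n => hidxanti _ _ (hstk n m0 m0)
      obtain ⟨N, hN⟩ := stabOfAntitone a hastep
      have hkey : ∀ n, N + 1 ≤ n → ∀ x : ↥(⋃ i, M i),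
          ((e n x : ↥(⋃ i, M i)) : ℚ) ∈ M (a N) := by
        intro n hn x
        obtain ⟨k, rfl⟩ : ∃ k, n = k + 1 := ⟨n - 1, by omega⟩
        have h1 : idx (e (k+1) x) ≤ a k := hidxanti _ _ (hstk k m0 x)
        have h2 : a (k+2) ≤ idx (e (k+1) x) := hidxanti _ _ (hstk (k+1) x m0)
        have hEq : idx (e (k+1) x) = a N := by
          rw [hN k (by omega)] at h1
          rw [hN (k+2) (by omega)] at h2
          exact le_antisymm h1 h2
        rw [← hEq]
        exact hidx _
      have hsubU : ∀ x : ↥(M (a N)), (x : ℚ) ∈ ⋃ i, M i := fun x => mem_iUnion.mpr ⟨a N, x.2⟩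
      set G : ∀ _ : ℕ, ↥(M (a N)) → ↥(M (a N)) := fun n x =>
        ⟨((e (N + 1 + n) ⟨(x : ℚ), hsubU x⟩ : ↥(⋃ i, M i)) : ℚ),
          hkey (N + 1 + n) (by omega) _⟩ with hG
      have hGsm : ∀ n, StrictMono (G n) := by
        intro n x y hxy
        have h1 : (⟨(x : ℚ), hsubU x⟩ : ↥(⋃ i, M i)) < ⟨(y : ℚ), hsubU y⟩ :=
          Subtype.mk_lt_mk.mpr (Subtype.coe_lt_coe.mpr hxy)
        exact Subtype.mk_lt_mk.mpr (Subtype.coe_lt_coe.mpr ((e (N + 1 + n)).strictMono h1))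
      refine ih (a N) (fun n => OrderEmbedding.ofStrictMono (G n) (hGsm n)) ?_
      intro n x y
      show G n x < G (n+1) y
      exact Subtype.mk_lt_mk.mpr (Subtype.coe_lt_coe.mpr
        (hstk (N + 1 + n) ⟨(x : ℚ), hsubU x⟩ ⟨(y : ℚ), hsubU y⟩))

end StmtEightHelpers

/-- If `L` is a countable linear order which is the ω-sum of a
sequence `⟨L_i⟩` of members of ℋ satisfying (*), then `A ⊆ L` contains a copy
of `L` iff for all `i, m` there is a finite `K ⊆ ω ∖ m` with
`L_i ↪ A ∩ ⋃_{j ∈ K} L_j`. -/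
theorem stmt8 {L : Type*} [LinearOrder L] [Countable L]
    (Li : ℕ → Set L) (h : IsOmegaSumH (univ : Set L) Li) (A : Set L) :
    (∃ C ∈ Copies L, C ⊆ A) ↔
      ∀ i m : ℕ, ∃ K : Finset ℕ, (∀ j ∈ K, m ≤ j) ∧
        Nonempty (↥(Li i) ↪o ↥(A ∩ ⋃ j ∈ K, Li j)) := by
  -- index infrastructure for the blocks of `L`
  have hcov : ∀ x : L, ∃ i, x ∈ Li i := by
    intro x
    have hx : x ∈ ⋃ i, Li i := by rw [h.union]; trivial
    exact mem_iUnion.mp hx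
  choose idx hidx using hcov
  have huniq : ∀ (x : L) (i : ℕ), x ∈ Li i → idx x = i := by
    intro x i hx
    by_contra hne
    exact (disjoint_left.mp (h.disj _ _ hne) (hidx x)) hx
  have hlt_idx : ∀ x y : L, idx x < idx y → x < y :=
    fun x y hxy => h.mono _ _ hxy x (hidx x) y (hidx y)
  have hle_idx : ∀ x y : L, x ≤ y → idx x ≤ idx y := by
    intro x y hxy
    by_contra hc
    push_neg at hc
    exact absurd (hlt_idx _ _ hc) (not_lt.mpr hxy)
  constructor
  · rintro ⟨C, hCcop, hCA⟩ i m
    obtain ⟨φ⟩ := hCcop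
    set g : L → L := fun x => ((φ.symm x : ↥C) : L) with hg
    have hgsm : StrictMono g := fun x y hxy => Subtype.coe_lt_coe.mpr (φ.symm.strictMono hxy)
    have hgA : ∀ x, g x ∈ A := fun x => hCA (φ.symm x).2
    by_cases hcase : ∃ j, Nonempty (↥(Li i) ↪o ↥(Li j)) ∧ ∀ x ∈ Li j, m ≤ idx (g x)
    · obtain ⟨j, ⟨ε⟩, hjx⟩ := hcase
      obtain ⟨z, hz⟩ := h.nonemp (j+1)
      refine ⟨Finset.Icc m (idx (g z)), fun k hk => (Finset.mem_Icc.mp hk).1, ?_⟩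
      have hmem : ∀ w : ↥(Li i),
          g ((ε w : ↥(Li j)) : L) ∈ A ∩ ⋃ k ∈ Finset.Icc m (idx (g z)), Li k := by
        intro w
        refine ⟨hgA _, ?_⟩
        have h1 : m ≤ idx (g ((ε w : ↥(Li j)) : L)) := hjx _ (ε w).2
        have h2 : idx (g ((ε w : ↥(Li j)) : L)) ≤ idx (g z) :=
          hle_idx _ _ (hgsm (h.mono j (j+1) (lt_add_one j) _ (ε w).2 z hz)).le
        exact mem_iUnion₂.mpr ⟨idx (g ((ε w : ↥(Li j)) : L)),
          Finset.mem_Icc.mpr ⟨h1, h2⟩, hidx _⟩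
      refine ⟨OrderEmbedding.ofStrictMono (fun w => ⟨g ((ε w : ↥(Li j)) : L), hmem w⟩) ?_⟩
      intro x y hxy
      exact Subtype.mk_lt_mk.mpr (hgsm (Subtype.coe_lt_coe.mpr (ε.strictMono hxy)))
    · exfalso
      push_neg at hcase
      have hlow : ∀ y : L, idx (g y) < m := by
        intro y
        obtain ⟨j, hjS, hjgt⟩ := (h.star i).exists_gt (idx y)
        obtain ⟨x, hxj, hxm⟩ := hcase j hjS
        have hyx : y < x := h.mono _ _ hjgt y (hidx y) x hxj
        exact lt_of_le_of_lt (hle_idx _ _ (hgsm hyx).le) hxm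
      choose mp hmp using h.nonemp
      set c : ℕ → ℕ := fun p => idx (g (mp p)) with hcdef
      have hcst : ∀ p, c p ≤ c (p+1) :=
        fun p => hle_idx _ _ (hgsm (h.mono p (p+1) (lt_add_one p) _ (hmp p) _ (hmp (p+1)))).le
      have hcbdd : ∀ p, c p ≤ m := fun p => (hlow (mp p)).le
      obtain ⟨N, hN⟩ := stabOfMonotoneBdd c hcst m hcbdd
      have hkey : ∀ p, N + 1 ≤ p → ∀ x ∈ Li p, g x ∈ Li (c N) := by
        intro p hp x hx
        have l1 : c N ≤ idx (g x) :=
          hle_idx _ _ (hgsm (h.mono N p (by omega) _ (hmp N) x hx)).le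
        have l2 : idx (g x) ≤ c N := by
          have h3 := hle_idx _ _ (hgsm (h.mono p (p+1) (lt_add_one p) x hx _ (hmp (p+1)))).le
          exact le_trans h3 (le_of_eq (hN (p+1) (by omega)))
        have hEq : idx (g x) = c N := le_antisymm l2 l1
        rw [← hEq]
        exact hidx _
      obtain ⟨Mq, hMq, ⟨ψ⟩⟩ := h.inH (c N)
      have hpinf : {j | Nonempty (↥(Li (c N)) ↪o ↥(Li j))}.Infinite := h.star (c N)
      set jn : ℕ → ℕ :=
        fun n => Nat.nth (fun j => Nonempty (↥(Li (c N)) ↪o ↥(Li j))) (n + (N+1)) with hjndef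
      have hjmem : ∀ n, Nonempty (↥(Li (c N)) ↪o ↥(Li (jn n))) :=
        fun n => Nat.nth_mem_of_infinite hpinf _
      have hjlt : ∀ n, jn n < jn (n+1) := fun n => Nat.nth_strictMono hpinf (by omega)
      have hjge : ∀ n, N + 1 ≤ jn n := by
        intro n
        have hle := (Nat.nth_strictMono hpinf).id_le (n + (N+1))
        simp only [id_eq] at hle
        exact le_trans (Nat.le_add_left (N+1) n) hle
      have hε : ∀ n, ∃ ε : ↥(Li (c N)) ↪o ↥(Li (jn n)), True := fun n => ⟨(hjmem n).some, trivial⟩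
      choose ε _ using hε
      set F : ∀ _ : ℕ, ↥Mq → ↥Mq := fun n x =>
        ψ ⟨g ((ε n (ψ.symm x) : ↥(Li (jn n))) : L),
          hkey (jn n) (hjge n) _ (ε n (ψ.symm x)).2⟩ with hFdef
      have hFsm : ∀ n, StrictMono (F n) := by
        intro n x y hxy
        apply ψ.strictMono
        exact Subtype.mk_lt_mk.mpr
          (hgsm (Subtype.coe_lt_coe.mpr ((ε n).strictMono (ψ.symm.strictMono hxy))))
      refine InH.noStack hMq (fun n => OrderEmbedding.ofStrictMono (F n) (hFsm n)) ?_
      intro n x y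
      show F n x < F (n+1) y
      apply ψ.strictMono
      refine Subtype.mk_lt_mk.mpr (hgsm ?_)
      exact h.mono (jn n) (jn (n+1)) (hjlt n) _ (ε n (ψ.symm x)).2 _ (ε (n+1) (ψ.symm y)).2
  · intro Hyp
    let ms : ℕ → ℕ := fun n => Nat.rec 0 (fun i mi => max mi (((Hyp i mi).choose).sup id + 1)) n
    let K : ℕ → Finset ℕ := fun i => (Hyp i (ms i)).choose
    have hspec : ∀ i, (∀ j ∈ K i, ms i ≤ j) ∧
        Nonempty (↥(Li i) ↪o ↥(A ∩ ⋃ j ∈ K i, Li j)) := fun i => (Hyp i (ms i)).choose_spec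
    have hms : ∀ i, ms (i+1) = max (ms i) ((K i).sup id + 1) := fun i => rfl
    have hmsmono : Monotone ms := monotone_nat_of_le_succ (fun i => by
      rw [hms]; exact le_max_left _ _)
    have hKlb : ∀ i, ∀ j ∈ K i, ms i ≤ j := fun i => (hspec i).1
    have hKub : ∀ i, ∀ j ∈ K i, j < ms (i+1) := by
      intro i j hj
      rw [hms]
      have hle : j ≤ (K i).sup id := Finset.le_sup (f := id) hj
      have := le_max_right (ms i) ((K i).sup id + 1)
      omega
    have hε : ∀ i, ∃ e : ↥(Li i) ↪o ↥(A ∩ ⋃ j ∈ K i, Li j), True :=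
      fun i => ⟨(hspec i).2.some, trivial⟩
    choose e _ using hε
    let fv : ∀ (i : ℕ) (x : L), x ∈ Li i → L :=
      fun i x hx => ((e i ⟨x, hx⟩ : ↥(A ∩ ⋃ j ∈ K i, Li j)) : L)
    let B : ℕ → Set L := fun i => {y | ∃ (x : L) (hx : x ∈ Li i), fv i x hx = y}
    have hBprop : ∀ i y, y ∈ B i → y ∈ A ∧ idx y ∈ K i := by
      rintro i y ⟨x, hx, rfl⟩
      have hy := (e i ⟨x, hx⟩).2
      refine ⟨hy.1, ?_⟩
      obtain ⟨k, hk, hmemk⟩ := mem_iUnion₂.mp hy.2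
      rw [huniq _ k hmemk]
      exact hk
    let C : Set L := ⋃ i, B i
    have hCA : C ⊆ A := iUnion_subset fun i y hy => (hBprop i y hy).1
    let f : L → L := fun x => fv (idx x) x (hidx x)
    have hf_eq : ∀ (i : ℕ) (x : L) (hx : x ∈ Li i), f x = fv i x hx := by
      intro i x hx
      have hh : idx x = i := huniq x i hx
      subst hh
      rfl
    have hfB : ∀ x, f x ∈ B (idx x) := fun x => ⟨x, hidx x, rfl⟩
    have hfC : ∀ x, f x ∈ C := fun x => mem_iUnion.mpr ⟨idx x, hfB x⟩
    have hf_sm : StrictMono f := by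
      intro x y hxy
      rcases lt_or_eq_of_le (hle_idx x y hxy.le) with hlt' | heq
    -- different blocks
      · have h1 : idx (f x) ∈ K (idx x) := (hBprop _ _ (hfB x)).2
        have h2 : idx (f y) ∈ K (idx y) := (hBprop _ _ (hfB y)).2
        have hlt'' : idx (f x) < idx (f y) :=
          lt_of_lt_of_le (hKub _ _ h1) (le_trans (hmsmono hlt') (hKlb _ _ h2))
        exact hlt_idx _ _ hlt''
      · have hy' : y ∈ Li (idx x) := by rw [heq]; exact hidx y
        have hfy : f y = fv (idx x) y hy' := hf_eq _ _ _
        rw [hfy]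
        show fv (idx x) x (hidx x) < fv (idx x) y hy'
        exact Subtype.coe_lt_coe.mpr ((e (idx x)).strictMono (Subtype.mk_lt_mk.mpr hxy))
    have hf_surj : ∀ c ∈ C, ∃ x, f x = c := by
      intro c hc
      obtain ⟨i, hci⟩ := mem_iUnion.mp hc
      obtain ⟨x, hx, hfx⟩ := hci
      exact ⟨x, (hf_eq i x hx).trans hfx⟩
    have hf'sm : StrictMono (fun x => (⟨f x, hfC x⟩ : ↥C)) :=
      fun x y hxy => Subtype.mk_lt_mk.mpr (hf_sm hxy)
    have hf'surj : Function.Surjective (fun x => (⟨f x, hfC x⟩ : ↥C)) := by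
      rintro ⟨c, hc⟩
      obtain ⟨x, hx⟩ := hf_surj c hc
      exact ⟨x, Subtype.ext hx⟩
    exact ⟨C, ⟨(StrictMono.orderIsoOfSurjective _ hf'sm hf'surj).symm⟩, hCA⟩
end

section
/- Let L be a countable linear order that is the ω-sum of a sequence ⟨L_i : i∈ω⟩ of members of ℋ satisfying condition (*). Then for A, B ∈ ℙ(L): A ≤* B if and only if for every C ∈ ℙ(L) with C ⊆ A and all i, m ∈ ω there exists a finite set K ⊆ ω∖m such that L_i order-embeds into C ∩ B ∩ ⋃_{j∈K} L_j (with the induced order). -/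
open Set

/-- Pigeonhole: a monotone map `ℚ → ℕ` takes the same value at two rationals. -/
lemma exists_lt_eq_of_monotone (p : ℚ → ℕ) (hp : Monotone p) :
    ∃ a b : ℚ, a < b ∧ p a = p b := by
  by_contra hcon
  push_neg at hcon
  -- p is strictly monotone on [0,1], hence injective there; pigeonhole
  have hinj : ∀ a b : ℚ, 0 ≤ a → a ≤ 1 → 0 ≤ b → b ≤ 1 → p a = p b → a = b := by
    intro a b _ _ _ _ hab
    rcases lt_trichotomy a b with h | h | h
    · exact absurd hab (hcon a b h)
    · exact h
    · exact absurd hab.symm (hcon b a h)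
  -- the map i ↦ p (i / (n+1)) on range (n+2) is injective into Icc (p 0) (p 1)
  set n : ℕ := p 1 - p 0 with hn
  have hmaps : ∀ i ∈ Finset.range (n + 2),
      p ((i : ℚ) / (n + 1)) ∈ Finset.Icc (p 0) (p 1) := by
    intro i hi
    simp only [Finset.mem_range] at hi
    have h0 : (0 : ℚ) ≤ (i : ℚ) / (n + 1) := by positivity
    have h1 : (i : ℚ) / (n + 1) ≤ 1 := by
      rw [div_le_one (by positivity)]
      have : (i : ℚ) ≤ (n + 1 : ℕ) := by exact_mod_cast Nat.lt_succ_iff.mp hi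
      simpa using this
    exact Finset.mem_Icc.2 ⟨hp h0, hp h1⟩
  have hcard : (Finset.Icc (p 0) (p 1)).card < (Finset.range (n + 2)).card := by
    rw [Nat.card_Icc, Finset.card_range]
    omega
  obtain ⟨i, hi, j, hj, hne, heq⟩ :=
    Finset.exists_ne_map_eq_of_card_lt_of_maps_to hcard hmaps
  have : (i : ℚ) / (n + 1) = (j : ℚ) / (n + 1) := by
    apply hinj <;> try positivity
    · rw [div_le_one (by positivity)]
      have hi' := Finset.mem_range.1 hi
      have : (i : ℚ) ≤ (n + 1 : ℕ) := by exact_mod_cast Nat.lt_succ_iff.mp hi'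
      simpa using this
    · rw [div_le_one (by positivity)]
      have hj' := Finset.mem_range.1 hj
      have : (j : ℚ) ≤ (n + 1 : ℕ) := by exact_mod_cast Nat.lt_succ_iff.mp hj'
      simpa using this
    · exact heq
  have : (i : ℚ) = j := by
    field_simp at this
    exact_mod_cast this
  exact hne (by exact_mod_cast this)

lemma exists_lt_eq_of_antitone (p : ℚ → ℕ) (hp : Antitone p) :
    ∃ a b : ℚ, a < b ∧ p a = p b := by
  obtain ⟨a, b, hab, heq⟩ := exists_lt_eq_of_monotone (fun q => p (-q))
    (fun x y hxy => hp (neg_le_neg hxy))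
  exact ⟨-b, -a, neg_lt_neg hab, heq.symm⟩

/-- ℚ is order isomorphic to any of its open intervals. -/
lemma rat_iso_Ioo {a b : ℚ} (hab : a < b) : Nonempty (ℚ ≃o ↥(Set.Ioo a b)) := by
  haveI : Nonempty ↥(Set.Ioo a b) := Set.Nonempty.to_subtype (Set.nonempty_Ioo.2 hab)
  exact Order.iso_of_countable_dense ℚ ↥(Set.Ioo a b)

section
variable {X : Type*} [LinearOrder X]

/-- If ℚ embeds into an increasing ω-sum of blocks, it embeds into one block. -/
lemma rat_embed_block (M : ℕ → Set X) (f : ℚ ↪o X)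
    (hf : ∀ q, ∃ i, f q ∈ M i)
    (hlt : ∀ i j, i < j → ∀ x ∈ M i, ∀ y ∈ M j, x < y) :
    ∃ i, Nonempty (ℚ ↪o ↥(M i)) := by
  classical
  choose p hp using hf
  have hmono : Monotone p := by
    intro q q' hqq'
    by_contra hcon
    push_neg at hcon
    have := hlt _ _ hcon _ (hp q') _ (hp q)
    exact absurd (f.monotone hqq') (not_le.2 this)
  obtain ⟨a, b, hab, heq⟩ := exists_lt_eq_of_monotone p hmono
  obtain ⟨φ⟩ := rat_iso_Ioo hab
  have hmem : ∀ q : ℚ, f ↑(φ q) ∈ M (p a) := by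
    intro q
    have h1 : p a ≤ p ↑(φ q) := hmono (le_of_lt (φ q).2.1)
    have h2 : p ↑(φ q) ≤ p b := hmono (le_of_lt (φ q).2.2)
    have : p ↑(φ q) = p a := le_antisymm (heq ▸ h2) h1
    exact this ▸ hp ↑(φ q)
  refine ⟨p a, ⟨OrderEmbedding.ofStrictMono (fun q => ⟨f ↑(φ q), hmem q⟩) ?_⟩⟩
  intro q q' hqq'
  have : (↑(φ q) : ℚ) < ↑(φ q') := by exact_mod_cast φ.strictMono hqq'
  exact Subtype.mk_lt_mk.2 (f.strictMono this)

/-- Decreasing (ω*) version. -/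
lemma rat_embed_block_anti (M : ℕ → Set X) (f : ℚ ↪o X)
    (hf : ∀ q, ∃ i, f q ∈ M i)
    (hlt : ∀ i j, i < j → ∀ x ∈ M i, ∀ y ∈ M j, y < x) :
    ∃ i, Nonempty (ℚ ↪o ↥(M i)) := by
  classical
  choose p hp using hf
  have hanti : Antitone p := by
    intro q q' hqq'
    by_contra hcon
    push_neg at hcon
    have := hlt _ _ hcon _ (hp q) _ (hp q')
    exact absurd (f.monotone hqq') (not_le.2 this)
  obtain ⟨a, b, hab, heq⟩ := exists_lt_eq_of_antitone p hanti
  obtain ⟨φ⟩ := rat_iso_Ioo hab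
  have hmem : ∀ q : ℚ, f ↑(φ q) ∈ M (p a) := by
    intro q
    have h1 : p ↑(φ q) ≤ p a := hanti (le_of_lt (φ q).2.1)
    have h2 : p b ≤ p ↑(φ q) := hanti (le_of_lt (φ q).2.2)
    have : p ↑(φ q) = p a := le_antisymm h1 (heq ▸ h2)
    exact this ▸ hp ↑(φ q)
  refine ⟨p a, ⟨OrderEmbedding.ofStrictMono (fun q => ⟨f ↑(φ q), hmem q⟩) ?_⟩⟩
  intro q q' hqq'
  have : (↑(φ q) : ℚ) < ↑(φ q') := by exact_mod_cast φ.strictMono hqq'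
  exact Subtype.mk_lt_mk.2 (f.strictMono this)

end

lemma inh_scattered {M : Set ℚ} (hM : InH M) : IsEmpty (ℚ ↪o ↥M) := by
  induction hM with
  | singleton q =>
      refine ⟨fun f => ?_⟩
      have h01 : f 0 < f 1 := f.strictMono (by norm_num)
      have : f 0 = f 1 := Subsingleton.elim _ _
      exact absurd (this ▸ h01) (lt_irrefl _)
  | iso hA hiso IH =>
      obtain ⟨φ⟩ := hiso
      exact ⟨fun f => IH.false (f.trans φ.symm.toOrderEmbedding)⟩
  | omegaSum M hne hH hstar hlt IH =>
      refine ⟨fun f => ?_⟩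
      obtain ⟨i, ⟨g⟩⟩ := rat_embed_block M (f.trans (OrderEmbedding.subtype _))
        (fun q => mem_iUnion.1 (f q).2) hlt
      exact (IH i).false g
  | omegaStarSum M hne hH hstar hlt IH =>
      refine ⟨fun f => ?_⟩
      obtain ⟨i, ⟨g⟩⟩ := rat_embed_block_anti M (f.trans (OrderEmbedding.subtype _))
        (fun q => mem_iUnion.1 (f q).2) hlt
      exact (IH i).false g

lemma setInH_scattered {L : Type*} [LinearOrder L] {A : Set L} (hA : SetInH A) :
    IsEmpty (ℚ ↪o ↥A) := by
  obtain ⟨M, hM, ⟨φ⟩⟩ := hA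
  exact ⟨fun f => (inh_scattered hM).false (f.trans φ.toOrderEmbedding)⟩

section Stacked
variable {F : Type*} [LinearOrder F]

/-- If `F` admits three stacked self-embeddings then ℚ embeds into `F`. -/
lemma dense_of_stacked (x0 : F) (s0 s1 s2 : F → F)
    (m0 : StrictMono s0) (m2 : StrictMono s2)
    (h01 : ∀ x y, s0 x < s1 y) (h12 : ∀ x y, s1 x < s2 y)
    (h02 : ∀ x y, s0 x < s2 y) :
    Nonempty (ℚ ↪o F) := by
  classical
  set E : List Bool → F → F :=
    fun σ z => σ.foldr (fun b w => bif b then s2 w else s0 w) z with hE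
  set e : List Bool → F := fun σ => E σ (s1 x0) with he
  have Emono : ∀ σ, StrictMono (E σ) := by
    intro σ
    induction σ with
    | nil => exact fun z w hzw => hzw
    | cons b σ ih =>
        intro z w hzw
        cases b
        · exact m0 (ih hzw)
        · exact m2 (ih hzw)
  have Eappend : ∀ σ τ z, E (σ ++ τ) z = E σ (E τ z) := by
    intro σ τ z
    simp [hE, List.foldr_append]
  have L1a : ∀ σ τ, e (σ ++ false :: τ) < e σ := by
    intro σ τ
    calc e (σ ++ false :: τ) = E σ (s0 (e τ)) := by simp only [he]; rw [Eappend]; rfl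
      _ < E σ (s1 x0) := Emono σ (h01 _ _)
      _ = e σ := rfl
  have L1b : ∀ σ τ, e σ < e (σ ++ true :: τ) := by
    intro σ τ
    calc e σ = E σ (s1 x0) := rfl
      _ < E σ (s2 (e τ)) := Emono σ (h12 _ _)
      _ = e (σ ++ true :: τ) := by simp only [he]; rw [Eappend]; rfl
  have L2 : ∀ ρ α β, e (ρ ++ false :: α) < e (ρ ++ true :: β) := by
    intro ρ α β
    calc e (ρ ++ false :: α) = E ρ (s0 (e α)) := by simp only [he]; rw [Eappend]; rfl
      _ < E ρ (s2 (e β)) := Emono ρ (h02 _ _)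
      _ = e (ρ ++ true :: β) := by simp only [he]; rw [Eappend]; rfl
  have lcp : ∀ σ τ : List Bool, (∃ β, τ = σ ++ β) ∨ (∃ α, σ = τ ++ α) ∨
      (∃ ρ α β, (σ = ρ ++ false :: α ∧ τ = ρ ++ true :: β) ∨
        (σ = ρ ++ true :: α ∧ τ = ρ ++ false :: β)) := by
    intro σ
    induction σ with
    | nil => exact fun τ => Or.inl ⟨τ, rfl⟩
    | cons a σ' ih =>
        intro τ
        cases τ with
        | nil => exact Or.inr (Or.inl ⟨a :: σ', rfl⟩)
        | cons b τ' =>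
            by_cases hab : a = b
            · subst hab
              rcases ih τ' with ⟨β, hβ⟩ | ⟨α, hα⟩ | ⟨ρ, α, β, hc⟩
              · exact Or.inl ⟨β, by rw [hβ]; rfl⟩
              · exact Or.inr (Or.inl ⟨α, by rw [hα]; rfl⟩)
              · refine Or.inr (Or.inr ⟨a :: ρ, α, β, ?_⟩)
                rcases hc with ⟨h1, h2⟩ | ⟨h1, h2⟩
                · exact Or.inl ⟨by rw [h1]; rfl, by rw [h2]; rfl⟩
                · exact Or.inr ⟨by rw [h1]; rfl, by rw [h2]; rfl⟩
            · refine Or.inr (Or.inr ⟨[], σ', τ', ?_⟩)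
              cases a <;> cases b <;> simp_all
  -- the range of e is a countable dense suborder without endpoints
  set S : Set F := Set.range e with hS
  haveI : Countable ↥S := (Set.countable_range e).to_subtype
  haveI : Nonempty ↥S := ⟨⟨e [], mem_range_self _⟩⟩
  haveI : NoMaxOrder ↥S := by
    constructor
    rintro ⟨x, hx⟩
    obtain ⟨σ, rfl⟩ := hx
    exact ⟨⟨e (σ ++ [true]), mem_range_self _⟩, Subtype.mk_lt_mk.2 (L1b σ [])⟩
  haveI : NoMinOrder ↥S := by
    constructor
    rintro ⟨x, hx⟩
    obtain ⟨σ, rfl⟩ := hx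
    exact ⟨⟨e (σ ++ [false]), mem_range_self _⟩, Subtype.mk_lt_mk.2 (L1a σ [])⟩
  haveI : DenselyOrdered ↥S := by
    constructor
    rintro ⟨x, hx⟩ ⟨y, hy⟩ hxy
    obtain ⟨σ, rfl⟩ := hx
    obtain ⟨τ, rfl⟩ := hy
    have hlt : e σ < e τ := Subtype.mk_lt_mk.1 hxy
    have mid : ∃ μ : List Bool, e σ < e μ ∧ e μ < e τ := by
      rcases lcp σ τ with ⟨β, rfl⟩ | ⟨α, rfl⟩ | ⟨ρ, α, β, ⟨h1, h2⟩ | ⟨h1, h2⟩⟩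
      · match β with
        | [] => rw [List.append_nil] at hlt; exact absurd hlt (lt_irrefl _)
        | false :: β' => exact absurd hlt (asymm (L1a σ β'))
        | true :: β' =>
            refine ⟨(σ ++ true :: β') ++ [false], ?_, L1a (σ ++ true :: β') []⟩
            have : (σ ++ true :: β') ++ [false] = σ ++ true :: (β' ++ [false]) := by simp
            rw [this]
            exact L1b σ (β' ++ [false])
      · match α with
        | [] => rw [List.append_nil] at hlt; exact absurd hlt (lt_irrefl _)
        | true :: α' => exact absurd hlt (asymm (L1b τ α'))
        | false :: α' =>
            refine ⟨(τ ++ false :: α') ++ [true], L1b (τ ++ false :: α') [], ?_⟩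
            have : (τ ++ false :: α') ++ [true] = τ ++ false :: (α' ++ [true]) := by simp
            rw [this]
            exact L1a τ (α' ++ [true])
      · subst h1; subst h2
        refine ⟨(ρ ++ false :: α) ++ [true], L1b (ρ ++ false :: α) [], ?_⟩
        have : (ρ ++ false :: α) ++ [true] = ρ ++ false :: (α ++ [true]) := by simp
        rw [this]
        exact L2 ρ (α ++ [true]) β
      · subst h1; subst h2
        exact absurd hlt (asymm (L2 ρ β α))
    obtain ⟨μ, hμ1, hμ2⟩ := mid
    exact ⟨⟨e μ, mem_range_self _⟩, Subtype.mk_lt_mk.2 hμ1, Subtype.mk_lt_mk.2 hμ2⟩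
  obtain ⟨ψ⟩ := Order.iso_of_countable_dense ℚ ↥S
  exact ⟨ψ.toOrderEmbedding.trans (OrderEmbedding.subtype _)⟩

end Stacked

section Main

variable {L : Type*} [LinearOrder L] {Li : ℕ → Set L}

lemma exists_blk (h : IsOmegaSumH (univ : Set L) Li) (x : L) : ∃ i, x ∈ Li i := by
  have : x ∈ ⋃ i, Li i := h.union ▸ mem_univ x
  exact mem_iUnion.1 this

lemma blk_le (h : IsOmegaSumH (univ : Set L) Li) {x y : L} {i j : ℕ}
    (hx : x ∈ Li i) (hy : y ∈ Li j) (hxy : x < y) : i ≤ j := by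
  by_contra hc
  push_neg at hc
  exact absurd hxy (asymm (h.mono j i hc y hy x hx))

/-- A copy of `L` cannot be contained in finitely many blocks. -/
lemma no_copy_low (h : IsOmegaSumH (univ : Set L) Li) (m : ℕ) (g : L → L)
    (hg : StrictMono g) (hlow : ∀ x : L, ∀ k, g x ∈ Li k → k < m) : False := by
  classical
  obtain ⟨x0, hx0⟩ := h.nonemp 0
  choose blk hblk using exists_blk h
  have hstep : ∀ n b : ℕ, ∃ t, b < t ∧ Nonempty (↥(Li (n % m)) ↪o ↥(Li t)) := by
    intro n b
    obtain ⟨t, ht, htb⟩ := (h.star (n % m)).exists_gt b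
    exact ⟨t, htb, ht⟩
  choose tf htf1 htf2 using hstep
  set T : ℕ → ℕ := fun n => Nat.rec (tf 0 0) (fun n Tn => tf (n+1) Tn) n with hT
  have hTsucc : ∀ n, T n < T (n + 1) := fun n => htf1 (n+1) (T n)
  have hTmono : StrictMono T := strictMono_nat_of_lt_succ hTsucc
  have hTemb : ∀ n, Nonempty (↥(Li (n % m)) ↪o ↥(Li (T n))) := by
    intro n
    cases n with
    | zero => exact htf2 0 0
    | succ n => exact htf2 (n+1) (T n)
  have em : ∀ n, ↥(Li (n % m)) ↪o ↥(Li (T n)) := fun n => (hTemb n).some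
  have hbm : ∀ x : L, blk (g x) < m := fun x => hlow x _ (hblk (g x))
  have hidx : ∀ (a : ℕ) (x : L), (blk (g x) + a * m) % m = blk (g x) := by
    intro a x
    rw [Nat.add_mul_mod_self_right]
    exact Nat.mod_eq_of_lt (hbm x)
  set σ : ℕ → L → L := fun a x =>
    ↑(em (blk (g x) + a * m) ⟨g x, by rw [hidx a x]; exact hblk (g x)⟩) with hσ
  have σmem : ∀ a x, σ a x ∈ Li (T (blk (g x) + a * m)) := fun a x =>
    (em (blk (g x) + a * m) _).2
  have emcongr : ∀ n n' (_ : n = n') (u : L) (hu : u ∈ Li (n % m)) (hu' : u ∈ Li (n' % m)),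
      (↑(em n ⟨u, hu⟩) : L) = ↑(em n' ⟨u, hu'⟩) := by
    intro n n' hnn' u hu hu'
    subst hnn'
    rfl
  have σlt : ∀ a (x y : L), x < y → σ a x < σ a y := by
    intro a x y hxy
    have hgxy : g x < g y := hg hxy
    have hle : blk (g x) ≤ blk (g y) := blk_le h (hblk _) (hblk _) hgxy
    rcases lt_or_eq_of_le hle with hlt' | heq
    · have hidxlt : blk (g x) + a * m < blk (g y) + a * m := by omega
      exact h.mono _ _ (hTmono hidxlt) _ (σmem a x) _ (σmem a y)
    · have key : σ a y = ↑(em (blk (g x) + a * m)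
          ⟨g y, by rw [hidx a x, heq]; exact hblk (g y)⟩) := by
        simp only [hσ]
        exact emcongr (blk (g y) + a * m) (blk (g x) + a * m) (by rw [heq]) (g y) _ _
      simp only [hσ] at key ⊢
      rw [key]
      exact Subtype.coe_lt_coe.2 ((em (blk (g x) + a * m)).strictMono
        (Subtype.mk_lt_mk.2 hgxy))
  have σstack : ∀ a a' (x y : L), a < a' → σ a x < σ a' y := by
    intro a a' x y haa'
    have hidxlt : blk (g x) + a * m < blk (g y) + a' * m := by
      calc blk (g x) + a * m < m + a * m := by
            have := hbm x
            omega
        _ = (a + 1) * m := by ring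
        _ ≤ a' * m := Nat.mul_le_mul_right m haa'
        _ ≤ blk (g y) + a' * m := Nat.le_add_left _ _
    exact h.mono _ _ (hTmono hidxlt) _ (σmem a x) _ (σmem a' y)
  have hσ0 : StrictMono (σ 0) := fun x y hxy => σlt 0 x y hxy
  have hσ2 : StrictMono (σ 2) := fun x y hxy => σlt 2 x y hxy
  obtain ⟨f⟩ := dense_of_stacked x0 (σ 0) (σ 1) (σ 2) hσ0 hσ2
    (fun x y => σstack 0 1 x y (by norm_num))
    (fun x y => σstack 1 2 x y (by norm_num))
    (fun x y => σstack 0 2 x y (by norm_num))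
  have hLscat : IsEmpty (ℚ ↪o L) := by
    refine ⟨fun f' => ?_⟩
    obtain ⟨i, ⟨g'⟩⟩ := rat_embed_block Li f' (fun q => exists_blk h (f' q)) h.mono
    exact (setInH_scattered (h.inH i)).false g'
  exact hLscat.false f

end Main


/-- If `L` is a countable linear order which is the ω-sum of a
sequence `⟨L_i⟩` of members of ℋ satisfying (*), then for `A, B ∈ ℙ(L)`:
`A ≤* B` iff for every copy `C ⊆ A` and all `i, m` there is a finite
`K ⊆ ω ∖ m` with `L_i ↪ C ∩ B ∩ ⋃_{j ∈ K} L_j`. -/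
theorem stmt9 {L : Type*} [LinearOrder L] [Countable L]
    (Li : ℕ → Set L) (h : IsOmegaSumH (univ : Set L) Li)
    (A B : Set L) (hA : A ∈ Copies L) (hB : B ∈ Copies L) :
    copyLE A B ↔
      ∀ C ∈ Copies L, C ⊆ A → ∀ i m : ℕ,
        ∃ K : Finset ℕ, (∀ j ∈ K, m ≤ j) ∧
          Nonempty (↥(Li i) ↪o ↥(C ∩ B ∩ ⋃ j ∈ K, Li j)) := by
  classical
  constructor
  · -- forward direction
    intro hle C hC hCA i m
    obtain ⟨D, hD, hDsub⟩ := hle C hC hCA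
    obtain ⟨φ⟩ := hD
    set g : L → L := fun x => ↑(φ.symm x) with hg
    have hgsm : StrictMono g := fun x y hxy => Subtype.coe_lt_coe.2 (φ.symm.strictMono hxy)
    have hgD : ∀ x, g x ∈ D := fun x => (φ.symm x).2
    -- Step 1: the copy D meets some block with index ≥ m
    have hstep1 : ∃ x : L, ∃ k, g x ∈ Li k ∧ m ≤ k := by
      by_contra hcon
      push_neg at hcon
      exact no_copy_low h m g hgsm (fun x k hk => hcon x k hk)
    obtain ⟨y0, k0, hk0mem, hk0m⟩ := hstep1
    obtain ⟨j0, hj0⟩ := exists_blk h y0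
    obtain ⟨j, hjstar, hjgt⟩ := (h.star i).exists_gt j0
    have emj : ↥(Li i) ↪o ↥(Li j) := hjstar.some
    obtain ⟨z, hz⟩ := h.nonemp (j + 1)
    obtain ⟨k1, hk1⟩ := exists_blk h (g z)
    refine ⟨Finset.Icc m k1, fun j' hj' => (Finset.mem_Icc.1 hj').1, ?_⟩
    have hmem : ∀ x : ↥(Li i), g ↑(emj x) ∈ C ∩ B ∩ ⋃ j' ∈ Finset.Icc m k1, Li j' := by
      intro x
      obtain ⟨kx, hkx⟩ := exists_blk h (g ↑(emj x))
      have hwlt : (↑(emj x) : L) < z := h.mono j (j + 1) (Nat.lt_succ_self j) _ (emj x).2 z hz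
      have hylt : y0 < ↑(emj x) := h.mono j0 j hjgt y0 hj0 _ (emj x).2
      have hub : kx ≤ k1 := blk_le h hkx hk1 (hgsm hwlt)
      have hlb : m ≤ kx := le_trans hk0m (blk_le h hk0mem hkx (hgsm hylt))
      refine ⟨⟨(hDsub (hgD _)).1, (hDsub (hgD _)).2⟩, ?_⟩
      exact mem_iUnion₂.2 ⟨kx, Finset.mem_Icc.2 ⟨hlb, hub⟩, hkx⟩
    refine ⟨OrderEmbedding.ofStrictMono (fun x => ⟨g ↑(emj x), hmem x⟩) ?_⟩
    intro x x' hxx'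
    have : (↑(emj x) : L) < ↑(emj x') := Subtype.coe_lt_coe.2 (emj.strictMono hxx')
    exact Subtype.mk_lt_mk.2 (hgsm this)
  · -- backward direction
    intro hyp C hC hCA
    have H : ∀ n mm : ℕ, ∃ K : Finset ℕ, (∀ j ∈ K, mm ≤ j) ∧
        Nonempty (↥(Li n) ↪o ↥(C ∩ B ∩ ⋃ j ∈ K, Li j)) := fun n mm => hyp C hC hCA n mm
    choose Kf hK1 hK2 using H
    set ms : ℕ → ℕ := fun n => Nat.rec 0 (fun n msn => (Kf n msn).sup id + 1) n with hms
    have fms : ∀ n, ms (n + 1) = (Kf n (ms n)).sup id + 1 := fun n => rfl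
    have fn : ∀ n, ↥(Li n) ↪o ↥(C ∩ B ∩ ⋃ j ∈ Kf n (ms n), Li j) :=
      fun n => (hK2 n (ms n)).some
    have hval : ∀ n (x : ↥(Li n)), ∃ j ∈ Kf n (ms n), (↑(fn n x) : L) ∈ Li j := by
      intro n x
      have := (fn n x).2.2
      simpa using mem_iUnion₂.1 this
    have hmsstep : ∀ k, ms k < ms (k + 1) := by
      intro k
      obtain ⟨xk, hxk⟩ := h.nonemp k
      obtain ⟨j0, hj0K, _⟩ := hval k ⟨xk, hxk⟩
      have h1 := hK1 k (ms k) j0 hj0K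
      have h2 : id j0 ≤ (Kf k (ms k)).sup id := Finset.le_sup hj0K
      rw [fms]
      simp only [id] at h2
      omega
    have hmsmono : StrictMono ms := strictMono_nat_of_lt_succ hmsstep
    have horder : ∀ n n' (x : ↥(Li n)) (y : ↥(Li n')), n < n' →
        (↑(fn n x) : L) < ↑(fn n' y) := by
      intro n n' x y hnn'
      obtain ⟨j, hjK, hjmem⟩ := hval n x
      obtain ⟨j', hj'K, hj'mem⟩ := hval n' y
      have h1 : id j ≤ (Kf n (ms n)).sup id := Finset.le_sup hjK
      simp only [id] at h1
      have h2 : ms n' ≤ j' := hK1 n' (ms n') j' hj'K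
      have h3 : ms (n + 1) ≤ ms n' := hmsmono.monotone hnn'
      have h4 : j < j' := by
        rw [fms] at h3
        omega
      exact h.mono j j' h4 _ hjmem _ hj'mem
    choose blk hblk using exists_blk h
    have fcongr : ∀ nn nn' (_ : nn = nn') (u : L) (hu : u ∈ Li nn) (hu' : u ∈ Li nn'),
        (↑(fn nn ⟨u, hu⟩) : L) = ↑(fn nn' ⟨u, hu'⟩) := by
      intro nn nn' hnn u hu hu'
      subst hnn
      rfl
    set G : L → L := fun x => ↑(fn (blk x) ⟨x, hblk x⟩) with hG
    have hGsm : StrictMono G := by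
      intro x y hxy
      have hle := blk_le h (hblk x) (hblk y) hxy
      rcases lt_or_eq_of_le hle with hlt' | heq
      · exact horder _ _ _ _ hlt'
      · have key : G y = ↑(fn (blk x) ⟨y, heq ▸ hblk y⟩) := by
          simp only [hG]
          exact fcongr (blk y) (blk x) heq.symm y (hblk y) _
        simp only [hG] at key ⊢
        rw [key]
        exact Subtype.coe_lt_coe.2 ((fn (blk x)).strictMono (Subtype.mk_lt_mk.2 hxy))
    refine ⟨Set.range G, ⟨(StrictMono.orderIso G hGsm).symm⟩, ?_⟩
    rintro _ ⟨x, rfl⟩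
    exact ⟨(fn (blk x) ⟨x, hblk x⟩).2.1.1, (fn (blk x) ⟨x, hblk x⟩).2.1.2⟩
end

section
/- Let L be a countable linear order that is the ω-sum of a sequence ⟨L_i : i∈ω⟩ of members of ℋ satisfying condition (*). Then ⟨ℙ(L),≤*⟩ is σ-closed: for every sequence ⟨A_n : n∈ω⟩ in ℙ(L) with A_{n+1} ≤* A_n for all n∈ω, there exists A ∈ ℙ(L) with A ≤* A_n for all n∈ω. -/
open Set

lemma my_no_strictanti (u : ℕ → ℕ) (hu : ∀ n, u (n + 1) < u n) : False := by
  have key : ∀ n, u n + n ≤ u 0 := by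
    intro n
    induction n with
    | zero => omega
    | succ n ih => have := hu n; omega
  have := key (u 0 + 1); omega

/-- Gluing blockwise order isomorphisms into an order isomorphism of unions. -/
lemma my_glue {α β : Type*} [LinearOrder α] [LinearOrder β]
    (X : ℕ → Set α) (Y : ℕ → Set β)
    (hX : ∀ i j, i < j → ∀ x ∈ X i, ∀ y ∈ X j, x < y)
    (hY : ∀ i j, i < j → ∀ x ∈ Y i, ∀ y ∈ Y j, x < y)
    (f : ∀ i, (↥(X i)) ≃o (↥(Y i))) :
    Nonempty ((↥(⋃ i, X i)) ≃o (↥(⋃ i, Y i))) := by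
  classical
  have hmemX : ∀ x : ↥(⋃ i, X i), ∃ i, (x : α) ∈ X i := fun x => mem_iUnion.mp x.2
  let ix : ↥(⋃ i, X i) → ℕ := fun x => (hmemX x).choose
  have hix : ∀ x, (x : α) ∈ X (ix x) := fun x => (hmemX x).choose_spec
  let F : ↥(⋃ i, X i) → ↥(⋃ i, Y i) := fun x =>
    ⟨(f (ix x) ⟨x, hix x⟩ : ↥(Y (ix x))), mem_iUnion.mpr ⟨ix x, (f (ix x) ⟨x, hix x⟩).2⟩⟩
  have hmono : StrictMono F := by
    intro x y hxy
    have hvalxy : (x : α) < (y : α) := hxy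
    rcases lt_trichotomy (ix x) (ix y) with hlt | heq | hgt
    · have : ((f (ix x) ⟨x, hix x⟩ : ↥(Y (ix x))) : β) <
        ((f (ix y) ⟨y, hix y⟩ : ↥(Y (ix y))) : β) :=
        hY _ _ hlt _ (f (ix x) ⟨x, hix x⟩).2 _ (f (ix y) ⟨y, hix y⟩).2
      exact this
    · have h1 : (⟨(x : α), heq ▸ hix x⟩ : ↥(X (ix y))) < ⟨(y : α), hix y⟩ := by
        simpa [Subtype.mk_lt_mk] using hvalxy
      have h2 := (f (ix y)).strictMono h1
      have h3 : ((f (ix y) ⟨(x : α), heq ▸ hix x⟩ : ↥(Y (ix y))) : β) <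
          ((f (ix y) ⟨y, hix y⟩ : ↥(Y (ix y))) : β) := h2
      show ((f (ix x) ⟨x, hix x⟩ : ↥(Y (ix x))) : β) < _
      have : ∀ (i : ℕ) (hi : (x:α) ∈ X i) (hxi : ix x = i),
          ((f (ix x) ⟨x, hix x⟩ : ↥(Y (ix x))) : β) = ((f i ⟨x, hi⟩ : ↥(Y i)) : β) := by
        intro i hi hxi; subst hxi; rfl
      rw [this (ix y) (heq ▸ hix x) heq]; exact h3
    · exact absurd (hX _ _ hgt _ (hix y) _ (hix x)) (not_lt.mpr hvalxy.le)
  have hsurj : Function.Surjective F := by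
    intro y
    obtain ⟨j, hj⟩ := mem_iUnion.mp y.2
    let x0 : ↥(X j) := (f j).symm ⟨y, hj⟩
    refine ⟨⟨(x0 : α), mem_iUnion.mpr ⟨j, x0.2⟩⟩, ?_⟩
    set x : ↥(⋃ i, X i) := ⟨(x0 : α), mem_iUnion.mpr ⟨j, x0.2⟩⟩
    have hieq : ix x = j := by
      by_contra hne
      rcases lt_or_gt_of_ne hne with hlt | hlt
      · exact lt_irrefl _ (hX _ _ hlt _ (hix x) _ x0.2)
      · exact lt_irrefl _ (hX _ _ hlt _ x0.2 _ (hix x))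
    apply Subtype.ext
    show ((f (ix x) ⟨x, hix x⟩ : ↥(Y (ix x))) : β) = (y : β)
    have : ∀ (i : ℕ) (hi : (x:α) ∈ X i) (hxi : ix x = i),
        ((f (ix x) ⟨x, hix x⟩ : ↥(Y (ix x))) : β) = ((f i ⟨x, hi⟩ : ↥(Y i)) : β) := by
      intro i hi hxi; subst hxi; rfl
    rw [this j (hieq ▸ hix x) hieq]
    have : (⟨(x : α), hieq ▸ hix x⟩ : ↥(X j)) = x0 := rfl
    rw [this]
    show (((f j) ((f j).symm ⟨y, hj⟩) : ↥(Y j)) : β) = (y : β)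
    rw [OrderIso.apply_symm_apply]
  exact ⟨StrictMono.orderIsoOfSurjective F hmono hsurj⟩

lemma my_rat_into_Ioo {a b : ℚ} (hab : a < b) : Nonempty (ℚ ↪o ↥(Set.Ioo a b)) := by
  haveI : DenselyOrdered ↥(Set.Ioo a b) := by
    constructor
    rintro ⟨x, hx⟩ ⟨y, hy⟩ h
    have hxy : x < y := h
    obtain ⟨z, hz1, hz2⟩ := exists_between hxy
    exact ⟨⟨z, hx.1.trans hz1, hz2.trans hy.2⟩, hz1, hz2⟩
  haveI : Nontrivial ↥(Set.Ioo a b) := by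
    obtain ⟨z, hz1, hz2⟩ := exists_between hab
    obtain ⟨w, hw1, hw2⟩ := exists_between hz2
    exact ⟨⟨z, hz1, hz2⟩, ⟨w, hz1.trans hw1, hw2⟩, by
      intro hzw
      have : z = w := congrArg Subtype.val hzw
      exact absurd this (ne_of_lt hw1)⟩
  exact Order.embedding_from_countable_to_dense ℚ _

/-- If ℚ embeds into an increasing ω-sum, it embeds into one of the blocks. -/
lemma my_qsum {α : Type*} [LinearOrder α] (M : ℕ → Set α)
    (hlt : ∀ i j, i < j → ∀ x ∈ M i, ∀ y ∈ M j, x < y)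
    (f : ℚ ↪o ↥(⋃ i, M i)) : ∃ i, Nonempty (ℚ ↪o ↥(M i)) := by
  classical
  have hmem : ∀ q : ℚ, ∃ i, ((f q : ↥(⋃ i, M i)) : α) ∈ M i := fun q => mem_iUnion.mp (f q).2
  let g : ℚ → ℕ := fun q => (hmem q).choose
  have hg : ∀ q, ((f q : ↥(⋃ i, M i)) : α) ∈ M (g q) := fun q => (hmem q).choose_spec
  have gmono : ∀ q q' : ℚ, q < q' → g q ≤ g q' := by
    intro q q' hqq'
    by_contra hc
    push_neg at hc
    have h1 : ((f q' : ↥(⋃ i, M i)) : α) < ((f q : ↥(⋃ i, M i)) : α) :=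
      hlt _ _ hc _ (hg q') _ (hg q)
    have h2 : (f q : ↥(⋃ i, M i)) < f q' := f.strictMono hqq'
    exact absurd (Subtype.coe_lt_coe.mpr h2) (not_lt.mpr h1.le)
  by_cases hc : ∃ a b : ℚ, a < b ∧ g a = g b
  · obtain ⟨a, b, hab, heq⟩ := hc
    obtain ⟨e⟩ := my_rat_into_Ioo hab
    refine ⟨g a, ⟨OrderEmbedding.ofStrictMono
      (fun q => ⟨((f ((e q : ↥(Set.Ioo a b)) : ℚ) : ↥(⋃ i, M i)) : α), ?_⟩) ?_⟩⟩
    · have h1 : a < ((e q : ↥(Set.Ioo a b)) : ℚ) := (e q).2.1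
      have h2 : ((e q : ↥(Set.Ioo a b)) : ℚ) < b := (e q).2.2
      have hle1 : g a ≤ g ((e q : ↥(Set.Ioo a b)) : ℚ) := gmono _ _ h1
      have hle2 : g ((e q : ↥(Set.Ioo a b)) : ℚ) ≤ g b := gmono _ _ h2
      have : g ((e q : ↥(Set.Ioo a b)) : ℚ) = g a := by omega
      exact this ▸ hg _
    · intro q q' hqq'
      have h1 : ((e q : ↥(Set.Ioo a b)) : ℚ) < ((e q' : ↥(Set.Ioo a b)) : ℚ) :=
        Subtype.coe_lt_coe.mpr (e.strictMono hqq')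
      have h2 := f.strictMono h1
      exact Subtype.mk_lt_mk.mpr (Subtype.coe_lt_coe.mpr h2)
  · push_neg at hc
    exfalso
    apply my_no_strictanti (fun n => g (-(n : ℚ)))
    intro n
    have hlt' : (-(((n : ℕ) + 1 : ℕ) : ℚ)) < -(n : ℚ) := by push_cast; linarith
    have h1 := gmono _ _ hlt'
    have h2 := hc _ _ hlt'
    omega

/-- If ℚ embeds into a decreasing ω*-sum, it embeds into one of the blocks. -/
lemma my_qsum' {α : Type*} [LinearOrder α] (M : ℕ → Set α)
    (hlt : ∀ i j, i < j → ∀ x ∈ M i, ∀ y ∈ M j, y < x)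
    (f : ℚ ↪o ↥(⋃ i, M i)) : ∃ i, Nonempty (ℚ ↪o ↥(M i)) := by
  classical
  have hmem : ∀ q : ℚ, ∃ i, ((f q : ↥(⋃ i, M i)) : α) ∈ M i := fun q => mem_iUnion.mp (f q).2
  let g : ℚ → ℕ := fun q => (hmem q).choose
  have hg : ∀ q, ((f q : ↥(⋃ i, M i)) : α) ∈ M (g q) := fun q => (hmem q).choose_spec
  have gmono : ∀ q q' : ℚ, q < q' → g q' ≤ g q := by
    intro q q' hqq'
    by_contra hcon
    push_neg at hcon
    have h1 : ((f q' : ↥(⋃ i, M i)) : α) < ((f q : ↥(⋃ i, M i)) : α) :=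
      hlt _ _ hcon _ (hg q) _ (hg q')
    have h2 : (f q : ↥(⋃ i, M i)) < f q' := f.strictMono hqq'
    exact absurd (Subtype.coe_lt_coe.mpr h2) (not_lt.mpr h1.le)
  by_cases hc : ∃ a b : ℚ, a < b ∧ g a = g b
  · obtain ⟨a, b, hab, heq⟩ := hc
    obtain ⟨e⟩ := my_rat_into_Ioo hab
    refine ⟨g a, ⟨OrderEmbedding.ofStrictMono
      (fun q => ⟨((f ((e q : ↥(Set.Ioo a b)) : ℚ) : ↥(⋃ i, M i)) : α), ?_⟩) ?_⟩⟩
    · have h1 : a < ((e q : ↥(Set.Ioo a b)) : ℚ) := (e q).2.1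
      have h2 : ((e q : ↥(Set.Ioo a b)) : ℚ) < b := (e q).2.2
      have hle1 : g ((e q : ↥(Set.Ioo a b)) : ℚ) ≤ g a := gmono _ _ h1
      have hle2 : g b ≤ g ((e q : ↥(Set.Ioo a b)) : ℚ) := gmono _ _ h2
      have : g ((e q : ↥(Set.Ioo a b)) : ℚ) = g a := by omega
      exact this ▸ hg _
    · intro q q' hqq'
      have h1 : ((e q : ↥(Set.Ioo a b)) : ℚ) < ((e q' : ↥(Set.Ioo a b)) : ℚ) :=
        Subtype.coe_lt_coe.mpr (e.strictMono hqq')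
      have h2 := f.strictMono h1
      exact Subtype.mk_lt_mk.mpr (Subtype.coe_lt_coe.mpr h2)
  · push_neg at hc
    exfalso
    apply my_no_strictanti (fun n => g ((n : ℚ)))
    intro n
    have hlt' : ((n : ℕ) : ℚ) < (((n : ℕ) + 1 : ℕ) : ℚ) := by push_cast; linarith
    have h1 := gmono _ _ hlt'
    have h2 := hc _ _ hlt'
    omega
lemma my_scatInH {M : Set ℚ} (hM : InH M) : ∀ _ : ℚ ↪o ↥M, False := by
  induction hM with
  | singleton q =>
    intro f
    have h0 : ((f 0 : ↥({q} : Set ℚ)) : ℚ) = q := (f 0).2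
    have h1 : ((f 1 : ↥({q} : Set ℚ)) : ℚ) = q := (f 1).2
    have : f 0 = f 1 := Subtype.ext (h0.trans h1.symm)
    have : (0 : ℚ) = 1 := f.injective this
    norm_num at this
  | iso hA hiso ih =>
    intro f
    obtain ⟨φ⟩ := hiso
    exact ih (f.trans φ.symm.toOrderEmbedding)
  | omegaSum M hne hH hstar hlt ih =>
    intro f
    obtain ⟨i, ⟨e⟩⟩ := my_qsum M hlt f
    exact ih i e
  | omegaStarSum M hne hH hstar hlt ih =>
    intro f
    obtain ⟨i, ⟨e⟩⟩ := my_qsum' M hlt f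
    exact ih i e
def myLexLT (s t : List Bool) : Prop :=
  (∃ u v, s = u ++ false :: v ∧ t = u) ∨
  (∃ u w, s = u ∧ t = u ++ true :: w) ∨
  (∃ u v w, s = u ++ false :: v ∧ t = u ++ true :: w)

lemma myLexLT_cons (b : Bool) {s t : List Bool} (h : myLexLT s t) :
    myLexLT (b :: s) (b :: t) := by
  rcases h with ⟨u, v, h1, h2⟩ | ⟨u, w, h1, h2⟩ | ⟨u, v, w, h1, h2⟩
  · exact Or.inl ⟨b :: u, v, by simp [h1], by simp [h2]⟩
  · exact Or.inr (Or.inl ⟨b :: u, w, by simp [h1], by simp [h2]⟩)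
  · exact Or.inr (Or.inr ⟨b :: u, v, w, by simp [h1], by simp [h2]⟩)

lemma myLexLT_append (w : List Bool) {s t : List Bool} (h : myLexLT s t) :
    myLexLT (w ++ s) (w ++ t) := by
  induction w with
  | nil => simpa using h
  | cons b w ih => simpa using myLexLT_cons b ih

lemma myLexLT_trichotomy : ∀ s t : List Bool, s = t ∨ myLexLT s t ∨ myLexLT t s := by
  intro s
  induction s with
  | nil =>
    intro t
    cases t with
    | nil => exact Or.inl rfl
    | cons b t' =>
      cases b with
      | false => exact Or.inr (Or.inr (Or.inl ⟨[], t', rfl, rfl⟩))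
      | true => exact Or.inr (Or.inl (Or.inr (Or.inl ⟨[], t', rfl, rfl⟩)))
  | cons a s' ih =>
    intro t
    cases t with
    | nil =>
      cases a with
      | false => exact Or.inr (Or.inl (Or.inl ⟨[], s', rfl, rfl⟩))
      | true => exact Or.inr (Or.inr (Or.inr (Or.inl ⟨[], s', rfl, rfl⟩)))
    | cons b t' =>
      by_cases hab : a = b
      · subst hab
        rcases ih t' with h | h | h
        · exact Or.inl (by rw [h])
        · exact Or.inr (Or.inl (myLexLT_cons a h))
        · exact Or.inr (Or.inr (myLexLT_cons a h))
      · cases a with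
        | false =>
          cases b with
          | false => exact absurd rfl hab
          | true => exact Or.inr (Or.inl (Or.inr (Or.inr ⟨[], s', t', rfl, rfl⟩)))
        | true =>
          cases b with
          | false => exact Or.inr (Or.inr (Or.inr (Or.inr ⟨[], t', s', rfl, rfl⟩)))
          | true => exact absurd rfl hab

lemma myLexLT_middle {s t : List Bool} (h : myLexLT s t) :
    ∃ r, myLexLT s r ∧ myLexLT r t := by
  rcases h with ⟨u, v, h1, h2⟩ | ⟨u, w, h1, h2⟩ | ⟨u, v, w, h1, h2⟩
  · refine ⟨u ++ false :: (v ++ [true]), ?_, ?_⟩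
    · rw [h1]
      have e1 : u ++ false :: v = (u ++ [false]) ++ v := by simp
      have e2 : u ++ false :: (v ++ [true]) = (u ++ [false]) ++ (v ++ true :: []) := by simp
      rw [e1, e2]
      exact myLexLT_append (u ++ [false]) (Or.inr (Or.inl ⟨v, [], rfl, rfl⟩))
    · rw [h2]
      exact Or.inl ⟨u, v ++ [true], rfl, rfl⟩
  · refine ⟨u ++ true :: (w ++ [false]), ?_, ?_⟩
    · rw [h1]
      exact Or.inr (Or.inl ⟨u, w ++ [false], rfl, rfl⟩)
    · rw [h2]
      have e1 : u ++ true :: (w ++ [false]) = (u ++ [true]) ++ (w ++ false :: []) := by simp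
      have e2 : u ++ true :: w = (u ++ [true]) ++ w := by simp
      rw [e1, e2]
      exact myLexLT_append (u ++ [true]) (Or.inl ⟨w, [], rfl, rfl⟩)
  · exact ⟨u, Or.inl ⟨u, v, h1, rfl⟩, Or.inr (Or.inl ⟨u, w, rfl, h2⟩)⟩
lemma my_pivot_dense {L : Type*} [LinearOrder L] [Countable L]
    (F G : L ↪o L) (c : L) (hF : ∀ x, F x < c) (hG : ∀ x, c < G x) :
    Nonempty (ℚ ↪o L) := by
  classical
  let eb : Bool → L ↪o L := fun b => bif b then G else F
  let e : List Bool → L ↪o L := fun s =>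
    List.rec (RelEmbedding.refl (α := L) (· ≤ ·)) (fun b _ ih => ih.trans (eb b)) s
  have e_nil : ∀ x, e [] x = x := fun _ => rfl
  have e_cons : ∀ b s x, e (b :: s) x = eb b (e s x) := fun _ _ _ => rfl
  have e_append : ∀ u t x, e (u ++ t) x = e u (e t x) := by
    intro u
    induction u with
    | nil => intro t x; rfl
    | cons b u ih =>
      intro t x
      show e (b :: (u ++ t)) x = e (b :: u) (e t x)
      rw [e_cons, e_cons, ih]
  have e_mono : ∀ s, StrictMono (e s) := fun s => (e s).strictMono
  let p : List Bool → L := fun s => e s c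
  have ebF : ∀ x, eb false x = F x := fun _ => rfl
  have ebG : ∀ x, eb true x = G x := fun _ => rfl
  have kF : ∀ u v, p (u ++ false :: v) < p u := by
    intro u v
    show e (u ++ false :: v) c < e u c
    rw [e_append, e_cons]
    exact e_mono u (by rw [ebF]; exact hF _)
  have kG : ∀ u w, p u < p (u ++ true :: w) := by
    intro u w
    show e u c < e (u ++ true :: w) c
    rw [e_append, e_cons]
    exact e_mono u (by rw [ebG]; exact hG _)
  have k3 : ∀ u v w, p (u ++ false :: v) < p (u ++ true :: w) := by
    intro u v w
    show e (u ++ false :: v) c < e (u ++ true :: w) c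
    rw [e_append, e_append, e_cons, e_cons]
    exact e_mono u (by rw [ebF, ebG]; exact (hF _).trans (hG _))
  have pmono : ∀ s t, myLexLT s t → p s < p t := by
    intro s t hst
    rcases hst with ⟨u, v, h1, h2⟩ | ⟨u, w, h1, h2⟩ | ⟨u, v, w, h1, h2⟩
    · rw [h1, h2]; exact kF u v
    · rw [h1, h2]; exact kG u w
    · rw [h1, h2]; exact k3 u v w
  let S : Set L := Set.range p
  haveI : DenselyOrdered ↥S := by
    constructor
    rintro ⟨x, s, rfl⟩ ⟨y, t, rfl⟩ hlt
    have hpq : p s < p t := hlt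
    have hst : myLexLT s t := by
      rcases myLexLT_trichotomy s t with heq | hlt' | hgt
      · exact absurd (heq ▸ hpq) (lt_irrefl _)
      · exact hlt'
      · exact absurd (pmono _ _ hgt) (not_lt.mpr hpq.le)
    obtain ⟨r, hr1, hr2⟩ := myLexLT_middle hst
    exact ⟨⟨p r, ⟨r, rfl⟩⟩, pmono _ _ hr1, pmono _ _ hr2⟩
  haveI : Nontrivial ↥S := by
    have hlt : p [] < p [true] := kG [] []
    exact ⟨⟨p [], ⟨[], rfl⟩⟩, ⟨p [true], ⟨[true], rfl⟩⟩, by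
      intro hEq
      exact absurd (congrArg Subtype.val hEq) (ne_of_lt hlt)⟩
  obtain ⟨q⟩ := Order.embedding_from_countable_to_dense ℚ ↥S
  exact ⟨q.trans (OrderEmbedding.subtype _)⟩
section MainAux

variable {L : Type*} [LinearOrder L]

/-- Decomposition of a copy of `L` into blocks isomorphic to the `Li`. -/
lemma my_decomp (Li : ℕ → Set L) (h : IsOmegaSumH (univ : Set L) Li)
    {C : Set L} (hC : C ∈ Copies L) :
    ∃ D : ℕ → Set L, (⋃ i, D i) = C ∧ (∀ i, D i ⊆ C) ∧ (∀ i, (D i).Nonempty) ∧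
      (∀ i j, i < j → ∀ x ∈ D i, ∀ y ∈ D j, x < y) ∧
      (∀ i, Nonempty ((↥(D i)) ≃o (↥(Li i)))) := by
  classical
  obtain ⟨g⟩ := id hC
  refine ⟨fun i => {x | ∃ hx : x ∈ C, g ⟨x, hx⟩ ∈ Li i}, ?_, ?_, ?_, ?_, ?_⟩
  · apply Set.ext
    intro x
    constructor
    · rintro ⟨i, hi⟩
      simp only [mem_iUnion] at hi ⊢
      obtain ⟨i, hx, _⟩ := (mem_iUnion.mp ⟨i, hi⟩ : ∃ i, x ∈ {x | ∃ hx : x ∈ C, g ⟨x, hx⟩ ∈ Li i})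
      exact hx
    · intro hx
      have : g ⟨x, hx⟩ ∈ ⋃ i, Li i := by rw [h.union]; exact mem_univ _
      obtain ⟨i, hi⟩ := mem_iUnion.mp this
      exact mem_iUnion.mpr ⟨i, ⟨hx, hi⟩⟩
  · rintro i x ⟨hx, _⟩
    exact hx
  · intro i
    obtain ⟨y, hy⟩ := h.nonemp i
    refine ⟨((g.symm y) : L), (g.symm y).2, ?_⟩
    have : (⟨((g.symm y) : L), (g.symm y).2⟩ : ↥C) = g.symm y := Subtype.ext rfl
    rw [this, OrderIso.apply_symm_apply]
    exact hy
  · rintro i j hij x ⟨hx, hgx⟩ y ⟨hy, hgy⟩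
    have := h.mono i j hij _ hgx _ hgy
    have h2 : (⟨x, hx⟩ : ↥C) < ⟨y, hy⟩ := g.lt_iff_lt.mp this
    exact h2
  · intro i
    have key : ∀ (x : L) (hx1 hx2 : x ∈ C), g ⟨x, hx1⟩ = g ⟨x, hx2⟩ := fun _ _ _ => rfl
    refine ⟨StrictMono.orderIsoOfSurjective
      (fun d => ⟨g ⟨(d : L), d.2.choose⟩, d.2.choose_spec⟩) ?_ ?_⟩
    · intro d d' hdd'
      have hval : (d : L) < (d' : L) := hdd'
      have : (⟨(d : L), d.2.choose⟩ : ↥C) < ⟨(d' : L), d'.2.choose⟩ := hval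
      exact g.lt_iff_lt.mpr this
    · rintro ⟨y, hy⟩
      have hmem : ((g.symm y) : L) ∈ {x | ∃ hx : x ∈ C, g ⟨x, hx⟩ ∈ Li i} := by
        refine ⟨(g.symm y).2, ?_⟩
        have : (⟨((g.symm y) : L), (g.symm y).2⟩ : ↥C) = g.symm y := Subtype.ext rfl
        rw [this, OrderIso.apply_symm_apply]
        exact hy
      refine ⟨⟨((g.symm y) : L), hmem⟩, ?_⟩
      apply Subtype.ext
      show (g ⟨((g.symm y) : L), _⟩ : L) = y
      have : (⟨((g.symm y) : L), hmem.choose⟩ : ↥C) = g.symm y := Subtype.ext rfl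
      rw [this, OrderIso.apply_symm_apply]

/-- Above any element of a copy there is a whole copy inside it. -/
lemma my_tail_at (Li : ℕ → Set L) (h : IsOmegaSumH (univ : Set L) Li)
    {C : Set L} (hC : C ∈ Copies L) {x : L} (hx : x ∈ C) :
    ∃ E ∈ Copies L, E ⊆ C ∧ ∀ y ∈ E, x < y := by
  classical
  obtain ⟨D, hDu, hDC, hDne, hDmono, hDiso⟩ := my_decomp Li h hC
  have hxD : ∃ i0, x ∈ D i0 := mem_iUnion.mp (hDu ▸ hx)
  obtain ⟨i0, hi0⟩ := hxD
  let aux : ℕ → ℕ → ℕ := fun i r => ((h.star i).exists_gt r).choose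
  have aux_spec : ∀ i r, Nonempty ((↥(Li i)) ↪o (↥(Li (aux i r)))) ∧ r < aux i r := by
    intro i r
    obtain ⟨hmem, hlt⟩ := ((h.star i).exists_gt r).choose_spec
    exact ⟨hmem, hlt⟩
  let jf : ℕ → ℕ := fun n => Nat.rec (aux 0 i0) (fun m ih => aux (m + 1) ih) n
  have jf0 : i0 < jf 0 := (aux_spec 0 i0).2
  have jfs : ∀ n, jf n < jf (n + 1) := fun n => (aux_spec (n + 1) (jf n)).2
  have jfemb : ∀ n, Nonempty ((↥(Li n)) ↪o (↥(Li (jf n)))) := by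
    intro n
    cases n with
    | zero => exact (aux_spec 0 i0).1
    | succ m => exact (aux_spec (m + 1) (jf m)).1
  have jfmono : StrictMono jf := strictMono_nat_of_lt_succ jfs
  have jfhigh : ∀ n, i0 < jf n := fun n => lt_of_lt_of_le jf0 (jfmono.monotone (Nat.zero_le n))
  let κ : ∀ n, (↥(Li n)) ↪o (↥(Li (jf n))) := fun n => (jfemb n).some
  let ψ : ∀ n, (↥(D (jf n))) ≃o (↥(Li (jf n))) := fun n => (hDiso (jf n)).some
  let emb : ∀ n, ↥(Li n) → L := fun n a => (((ψ n).symm ((κ n) a) : ↥(D (jf n))) : L)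
  have emb_mem : ∀ n a, emb n a ∈ D (jf n) := fun n a => ((ψ n).symm ((κ n) a)).2
  have emb_mono : ∀ n, StrictMono (emb n) := by
    intro n a a' haa'
    have h1 := (κ n).strictMono haa'
    have h2 := (ψ n).symm.strictMono h1
    exact h2
  let S : ℕ → Set L := fun n => Set.range (emb n)
  have hSiso : ∀ n, Nonempty ((↥(S n)) ≃o (↥(Li n))) :=
    fun n => ⟨((emb_mono n).orderIso (emb n)).symm⟩
  have hSsub : ∀ n, S n ⊆ D (jf n) := by
    rintro n x ⟨a, rfl⟩
    exact emb_mem n a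
  have hSmono : ∀ i j, i < j → ∀ x ∈ S i, ∀ y ∈ S j, x < y := by
    intro i j hij x hx y hy
    exact hDmono (jf i) (jf j) (jfmono hij) _ (hSsub i hx) _ (hSsub j hy)
  obtain ⟨φ⟩ := my_glue S Li hSmono h.mono (fun n => (hSiso n).some)
  have iso2 : (↥(⋃ i, Li i)) ≃o L := (OrderIso.setCongr _ _ h.union).trans OrderIso.Set.univ
  refine ⟨⋃ n, S n, ⟨φ.trans iso2⟩, ?_, ?_⟩
  · rintro y hy
    obtain ⟨n, hn⟩ := mem_iUnion.mp hy
    exact hDC (jf n) (hSsub n hn)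
  · intro y hy
    obtain ⟨n, hn⟩ := mem_iUnion.mp hy
    exact hDmono i0 (jf n) (jfhigh n) _ hi0 _ (hSsub n hn)

/-- `L` itself is scattered. -/
lemma my_scatL (Li : ℕ → Set L) (h : IsOmegaSumH (univ : Set L) Li)
    (f : ℚ ↪o L) : False := by
  have f' : ℚ ↪o ↥(⋃ i, Li i) := OrderEmbedding.ofStrictMono
    (fun q => (⟨f q, by rw [h.union]; exact mem_univ _⟩ : ↥(⋃ i, Li i)))
    (fun q q' hqq' => by
      have : f q < f q' := f.strictMono hqq'
      exact Subtype.mk_lt_mk.mpr this)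
  obtain ⟨i, ⟨e⟩⟩ := my_qsum Li h.mono f'
  obtain ⟨M, hM, ⟨φ⟩⟩ := h.inH i
  exact my_scatInH hM (e.trans φ.toOrderEmbedding)

/-- `L` does not embed into a single block. -/
lemma my_noemb [Countable L] (Li : ℕ → Set L) (h : IsOmegaSumH (univ : Set L) Li)
    (r : ℕ) (f : L ↪o L) (hf : ∀ x, f x ∈ Li r) : False := by
  obtain ⟨c, hc⟩ := h.nonemp (r + 1)
  have hF : ∀ x, f x < c := fun x => h.mono r (r + 1) (Nat.lt_succ_self r) _ (hf x) _ hc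
  have huniv : (univ : Set L) ∈ Copies L := ⟨OrderIso.Set.univ⟩
  obtain ⟨E, hE, _, hgt⟩ := my_tail_at Li h huniv (mem_univ c)
  obtain ⟨gE⟩ := hE
  let G : L ↪o L := gE.symm.toOrderEmbedding.trans (OrderEmbedding.subtype _)
  have hG : ∀ x, c < G x := fun x => hgt _ (gE.symm x).2
  obtain ⟨q⟩ := my_pivot_dense f G c hF hG
  exact my_scatL Li h q

/-- Every copy contained in a union of increasing blocks embeddable into the
`Li`-blocks meets arbitrarily high-indexed blocks. -/
lemma my_exists_high [Countable L] (Li : ℕ → Set L) (h : IsOmegaSumH (univ : Set L) Li)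
    (W : ℕ → Set L) (hW : ∀ i j, i < j → ∀ x ∈ W i, ∀ y ∈ W j, x < y)
    (hemb : ∀ k, Nonempty ((↥(W k)) ↪o (↥(Li k))))
    {C : Set L} (hC : C ∈ Copies L) (hsub : C ⊆ ⋃ k, W k) (n : ℕ) :
    ∃ x ∈ C, ∃ k, n ≤ k ∧ x ∈ W k := by
  classical
  by_contra hcon
  push_neg at hcon
  -- C is nonempty
  obtain ⟨z, _⟩ := h.nonemp 0
  obtain ⟨g⟩ := id hC
  have hCne : ((g.symm z : ↥C) : L) ∈ C := (g.symm z).2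
  set x0 : L := ((g.symm z : ↥C) : L)
  let J : Set ℕ := {k | ∃ x ∈ C, x ∈ W k}
  have hJne : J.Nonempty := by
    obtain ⟨k, hk⟩ := mem_iUnion.mp (hsub hCne)
    exact ⟨k, x0, hCne, hk⟩
  have hJbdd : BddAbove J := by
    refine ⟨n, ?_⟩
    rintro k ⟨x, hxC, hxW⟩
    by_contra hk
    push_neg at hk
    exact hcon x hxC k (le_of_lt hk) hxW
  have hrJ : sSup J ∈ J := Nat.sSup_mem hJne hJbdd
  set r := sSup J
  obtain ⟨x, hxC, hxW⟩ := hrJ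
  obtain ⟨E, hE, hEC, hgt⟩ := my_tail_at Li h hC hxC
  have hEW : E ⊆ W r := by
    intro y hy
    obtain ⟨k', hk'⟩ := mem_iUnion.mp (hsub (hEC hy))
    have hle : k' ≤ r := le_csSup hJbdd ⟨y, hEC hy, hk'⟩
    rcases lt_or_eq_of_le hle with hlt | heq
    · exact absurd (hW k' r hlt _ hk' _ hxW) (not_lt.mpr (hgt y hy).le)
    · exact heq ▸ hk'
  obtain ⟨gE⟩ := hE
  obtain ⟨embW⟩ := hemb r
  let incl : (↥E) ↪o (↥(W r)) := OrderEmbedding.ofStrictMono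
    (fun e => ⟨(e : L), hEW e.2⟩) (fun e e' hee' => Subtype.mk_lt_mk.mpr hee')
  let f : L ↪o L := gE.symm.toOrderEmbedding.trans
    (incl.trans (embW.trans (OrderEmbedding.subtype _)))
  have hfmem : ∀ y, f y ∈ Li r := fun y => (embW (incl (gE.symm y))).2
  exact my_noemb Li h r f hfmem

end MainAux
section FinalAux

variable {L : Type*} [LinearOrder L]

lemma my_chain (A : ℕ → Set L) (hdec : ∀ n, copyLE (A (n + 1)) (A n)) :
    ∀ n, ∀ C ∈ Copies L, C ⊆ A n → ∃ D ∈ Copies L, D ⊆ C ∧ ∀ m, m ≤ n → D ⊆ A m := by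
  intro n
  induction n with
  | zero =>
    intro C hC hsub
    exact ⟨C, hC, subset_rfl, fun m hm => by
      have : m = 0 := Nat.le_zero.mp hm
      rw [this]; exact hsub⟩
  | succ n ih =>
    intro C hC hsub
    obtain ⟨D, hD, hDsub⟩ := hdec n C hC hsub
    have hDC : D ⊆ C := hDsub.trans inter_subset_left
    have hDA : D ⊆ A n := hDsub.trans inter_subset_right
    obtain ⟨E, hE, hED, hEall⟩ := ih D hD hDA
    refine ⟨E, hE, hED.trans hDC, ?_⟩
    intro m hm
    rcases Nat.lt_or_ge m (n + 1) with hlt | hge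
    · exact hEall m (Nat.lt_succ_iff.mp hlt)
    · have : m = n + 1 := le_antisymm hm hge
      rw [this]
      exact (hED.trans hDC).trans hsub

lemma my_high_piece [Countable L] (Li : ℕ → Set L) (h : IsOmegaSumH (univ : Set L) Li)
    {C : Set L} (hC : C ∈ Copies L) (k : ℕ) (z : L) :
    ∃ T : Set L, ∃ y : L, Nonempty ((↥T) ≃o (↥(Li k))) ∧ T ⊆ C ∧
      (∀ t ∈ T, z < t) ∧ (∀ t ∈ T, t < y) := by
  classical
  have hz : z ∈ ⋃ i, Li i := by rw [h.union]; exact mem_univ _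
  obtain ⟨iz, hiz⟩ := mem_iUnion.mp hz
  have hCsub : C ⊆ ⋃ i, Li i := by rw [h.union]; exact subset_univ C
  obtain ⟨x, hxC, k', hk', hxW⟩ := my_exists_high Li h Li h.mono
    (fun k => ⟨RelEmbedding.refl _⟩) hC hCsub (iz + 1)
  have hzx : z < x := h.mono iz k' (Nat.lt_of_succ_le hk') _ hiz _ hxW
  obtain ⟨E, hE, hEC, hgt⟩ := my_tail_at Li h hC hxC
  obtain ⟨D, hDu, hDC', hDne, hDmono, hDiso⟩ := my_decomp Li h hE
  obtain ⟨hjemb, _⟩ := ((h.star k).exists_gt 0).choose_spec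
  set j := ((h.star k).exists_gt 0).choose
  obtain ⟨κ⟩ := hjemb
  obtain ⟨ψ⟩ := hDiso j
  let emb : ↥(Li k) → L := fun a => ((ψ.symm (κ a) : ↥(D j)) : L)
  have emb_mem : ∀ a, emb a ∈ D j := fun a => (ψ.symm (κ a)).2
  have emb_mono : StrictMono emb := by
    intro a a' haa'
    exact ψ.symm.strictMono ((κ).strictMono haa')
  obtain ⟨w, hw⟩ := hDne (j + 1)
  refine ⟨Set.range emb, w, ⟨(emb_mono.orderIso emb).symm⟩, ?_, ?_, ?_⟩
  · rintro t ⟨a, rfl⟩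
    exact hEC (hDC' j (emb_mem a))
  · rintro t ⟨a, rfl⟩
    exact hzx.trans (hgt _ (hDC' j (emb_mem a)))
  · rintro t ⟨a, rfl⟩
    exact hDmono j (j + 1) (Nat.lt_succ_self j) _ (emb_mem a) _ hw

end FinalAux
/-- If `L` is a countable linear order which is the ω-sum of a
sequence of members of ℋ satisfying (*), then `⟨ℙ(L), ≤*⟩` is σ-closed. -/
theorem stmt10 {L : Type*} [LinearOrder L] [Countable L]
    (Li : ℕ → Set L) (h : IsOmegaSumH (univ : Set L) Li)
    (A : ℕ → Set L) (hA : ∀ n, A n ∈ Copies L)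
    (hdec : ∀ n, copyLE (A (n + 1)) (A n)) :
    ∃ B ∈ Copies L, ∀ n, copyLE B (A n) := by
  classical
  obtain ⟨z0, _⟩ := h.nonemp 0
  -- `Good k z ⟨T, y⟩`: a block of type `Li k`, deep in `A₀,…,A_k`, above `z`, below `y`.
  set Good : ℕ → L → (Set L × L) → Prop := fun k z Ty =>
    Nonempty ((↥Ty.1) ≃o (↥(Li k))) ∧ (∀ m, m ≤ k → Ty.1 ⊆ A m) ∧
      (∀ t ∈ Ty.1, z < t) ∧ (∀ t ∈ Ty.1, t < Ty.2) with hGood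
  have exists_good : ∀ k z, ∃ Ty, Good k z Ty := by
    intro k z
    obtain ⟨C, hC, _, hCall⟩ := my_chain A hdec k (A k) (hA k) subset_rfl
    obtain ⟨T, y, hiso, hTC, hz, hy⟩ := my_high_piece Li h hC k z
    exact ⟨(T, y), hiso, fun m hm => hTC.trans (hCall m hm), hz, hy⟩
  let seq : ℕ → Set L × L := fun n =>
    Nat.rec (exists_good 0 z0).choose (fun m ih => (exists_good (m + 1) ih.2).choose) n
  have seq0 : Good 0 z0 (seq 0) := (exists_good 0 z0).choose_spec
  have seqs : ∀ n, Good (n + 1) (seq n).2 (seq (n + 1)) :=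
    fun n => (exists_good (n + 1) (seq n).2).choose_spec
  set T : ℕ → Set L := fun n => (seq n).1 with hT
  set y : ℕ → L := fun n => (seq n).2 with hy
  have hiso : ∀ k, Nonempty ((↥(T k)) ≃o (↥(Li k))) := by
    intro k
    cases k with
    | zero => exact seq0.1
    | succ m => exact (seqs m).1
  have hsubA : ∀ k m, m ≤ k → T k ⊆ A m := by
    intro k
    cases k with
    | zero => exact seq0.2.1
    | succ m => exact (seqs m).2.1
  have hbound : ∀ k, ∀ t ∈ T k, t < y k := by
    intro k
    cases k with
    | zero => exact seq0.2.2.2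
    | succ m => exact (seqs m).2.2.2
  have habove : ∀ k, ∀ t ∈ T (k + 1), y k < t := fun k => (seqs k).2.2.1
  have hTne : ∀ k, (T k).Nonempty := by
    intro k
    obtain ⟨φ⟩ := hiso k
    obtain ⟨w, hw⟩ := h.nonemp k
    exact ⟨((φ.symm ⟨w, hw⟩ : ↥(T k)) : L), (φ.symm ⟨w, hw⟩).2⟩
  have hyy : ∀ k, y k < y (k + 1) := by
    intro k
    obtain ⟨t, ht⟩ := hTne (k + 1)
    exact (habove k t ht).trans (hbound (k + 1) t ht)
  have ymono : StrictMono y := strictMono_nat_of_lt_succ hyy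
  have Tmono : ∀ i j, i < j → ∀ a ∈ T i, ∀ b ∈ T j, a < b := by
    intro i j hij a ha b hb
    obtain ⟨j', rfl⟩ : ∃ j', j = j' + 1 := ⟨j - 1, (Nat.succ_pred_eq_of_pos (Nat.pos_of_ne_zero (by omega))).symm⟩
    have h1 : a < y i := hbound i a ha
    have h2 : y i ≤ y j' := ymono.monotone (Nat.lt_succ_iff.mp hij)
    exact (h1.trans_le h2).trans (habove j' b hb)
  -- the diagonal copy
  refine ⟨⋃ k, T k, ?_, ?_⟩
  · obtain ⟨φ⟩ := my_glue T Li Tmono h.mono (fun k => (hiso k).some)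
    exact ⟨φ.trans ((OrderIso.setCongr _ _ h.union).trans OrderIso.Set.univ)⟩
  · intro n C hC hCB
    obtain ⟨x, hxC, k, hk, hxT⟩ := my_exists_high Li h T Tmono
      (fun k => ⟨((hiso k).some).toOrderEmbedding⟩) hC hCB n
    obtain ⟨D, hD, hDC, hgt⟩ := my_tail_at Li h hC hxC
    have hDA : D ⊆ A n := by
      intro d hd
      obtain ⟨k', hk'⟩ := mem_iUnion.mp (hCB (hDC hd))
      have hkk' : k ≤ k' := by
        by_contra hcon
        push_neg at hcon
        exact absurd (Tmono k' k hcon _ hk' _ hxT) (not_lt.mpr (hgt d hd).le)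
      exact hsubA k' n (hk.trans hkk') hk'
    exact ⟨D, hD, subset_inter hDC hDA⟩
end

section
/- Let L⁰ be a countable linear order that is the ω-sum of a sequence ⟨L⁰_i : i∈ω⟩ of members of ℋ satisfying condition (*), and let L¹ be a countable linear order that is the ω-sum of a sequence ⟨L¹_i : i∈ω⟩ of members of ℋ satisfying condition (*). Then L⁰ order-embeds into L¹_i for some i∈ω if and only if there exists m∈ω such that L⁰ order-embeds into L¹_0 ∪ … ∪ L¹_m (with the induced order). -/
open Set

/-- Inclusion of a subset as an order embedding. -/
def inclEmb {L : Type*} [Preorder L] {A B : Set L} (h : A ⊆ B) : ↥A ↪o ↥B :=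
  ⟨⟨Set.inclusion h, Set.inclusion_injective h⟩, Iff.rfl⟩

/-- An ω-sum satisfying (*) embeds into any of its tails. -/
lemma omegaSum_embed_tail {L : Type*} [LinearOrder L] (Li : ℕ → Set L)
    (h : IsOmegaSumH (univ : Set L) Li) (n : ℕ) :
    ∃ G : L ↪o L, ∀ x, ∃ i, n < i ∧ G x ∈ Li i := by
  classical
  have hmem : ∀ x : L, ∃ i, x ∈ Li i := fun x =>
    mem_iUnion.mp (h.union ▸ mem_univ x)
  choose idx hidx using hmem
  have hex : ∀ i k, ∃ j, Nonempty (↥(Li i) ↪o ↥(Li j)) ∧ k < j := by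
    intro i k
    obtain ⟨j, hj, hk⟩ := (h.star i).exists_gt k
    exact ⟨j, hj, hk⟩
  let σ : ℕ → ℕ := fun i => Nat.rec (Classical.choose (hex 0 n))
      (fun i prev => Classical.choose (hex (i + 1) prev)) i
  have hσ0 : Nonempty (↥(Li 0) ↪o ↥(Li (σ 0))) ∧ n < σ 0 :=
    Classical.choose_spec (hex 0 n)
  have hσs : ∀ i, Nonempty (↥(Li (i + 1)) ↪o ↥(Li (σ (i + 1)))) ∧ σ i < σ (i + 1) :=
    fun i => Classical.choose_spec (hex (i + 1) (σ i))
  have hσemb : ∀ i, Nonempty (↥(Li i) ↪o ↥(Li (σ i))) := by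
    intro i
    cases i with
    | zero => exact hσ0.1
    | succ i => exact (hσs i).1
  have hσmono : StrictMono σ := strictMono_nat_of_lt_succ fun i => (hσs i).2
  have hσgt : ∀ i, n < σ i := by
    intro i
    calc n < σ 0 := hσ0.2
    _ ≤ σ i := hσmono.monotone (Nat.zero_le i)
  let e : ∀ i, ↥(Li i) ↪o ↥(Li (σ i)) := fun i => Classical.choice (hσemb i)
  have hidx_mono : ∀ x y : L, x < y → idx x ≤ idx y := by
    intro x y hxy
    by_contra hc
    push_neg at hc
    exact absurd (h.mono _ _ hc y (hidx y) x (hidx x)) (not_lt.mpr hxy.le)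
  let G : L → L := fun x => (e (idx x) ⟨x, hidx x⟩ : L)
  have hGmem : ∀ x, G x ∈ Li (σ (idx x)) := fun x => (e (idx x) ⟨x, hidx x⟩).2
  have hGsm : StrictMono G := by
    intro x y hxy
    rcases lt_or_eq_of_le (hidx_mono x y hxy) with hlt | heq
    · exact h.mono _ _ (hσmono hlt) _ (hGmem x) _ (hGmem y)
    · have key : ∀ i j, i = j → ∀ (hx : x ∈ Li i) (hy : y ∈ Li j),
          ((e i ⟨x, hx⟩ : L) < (e j ⟨y, hy⟩ : L)) := by
        rintro i _ rfl hx hy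
        exact (e i).strictMono (Subtype.mk_lt_mk.mpr hxy)
      exact key _ _ heq (hidx x) (hidx y)
  exact ⟨OrderEmbedding.ofStrictMono G hGsm,
    fun x => ⟨σ (idx x), hσgt (idx x), hGmem x⟩⟩

/-- For `L⁰, L¹` countable linear orders which are ω-sums of
sequences of members of ℋ satisfying (*): `L⁰` order-embeds into some `L¹_i`
iff `L⁰` order-embeds into `L¹_0 ∪ ⋯ ∪ L¹_m` for some `m`. -/
theorem stmt11 {L0 L1 : Type*} [LinearOrder L0] [LinearOrder L1]
    [Countable L0] [Countable L1]
    (Li0 : ℕ → Set L0) (h0 : IsOmegaSumH (univ : Set L0) Li0)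
    (Li1 : ℕ → Set L1) (h1 : IsOmegaSumH (univ : Set L1) Li1) :
    (∃ i : ℕ, Nonempty (L0 ↪o ↥(Li1 i))) ↔
      (∃ m : ℕ, Nonempty (L0 ↪o ↥(⋃ i ≤ m, Li1 i))) := by
  classical
  constructor
  · rintro ⟨i, ⟨f⟩⟩
    refine ⟨i, ⟨f.trans (inclEmb ?_)⟩⟩
    exact subset_biUnion_of_mem (le_refl i)
  · rintro ⟨m, ⟨f⟩⟩
    -- membership of values of f
    have hfm : ∀ x : L0, ∃ s ≤ m, ((f x : ↥(⋃ i ≤ m, Li1 i)) : L1) ∈ Li1 s := by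
      intro x
      obtain ⟨s, hs, hm⟩ := mem_iUnion₂.mp (f x).2
      exact ⟨s, hs, hm⟩
    set P : ℕ → Prop := fun i => ∃ x : L0, ((f x : ↥(⋃ i ≤ m, Li1 i)) : L1) ∈ Li1 i with hP
    set t : ℕ := Nat.findGreatest P m with ht
    obtain ⟨x1, hx1⟩ := h0.nonemp 0
    obtain ⟨s0, hs0m, hs0⟩ := hfm x1
    have hPt : P t := Nat.findGreatest_spec hs0m ⟨x1, hs0⟩
    have hmax : ∀ s, P s → s ≤ m → s ≤ t := fun s hs hsm => Nat.le_findGreatest hsm hs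
    obtain ⟨x0, hx0⟩ := hPt
    have key : ∀ y : L0, x0 < y → ((f y : ↥(⋃ i ≤ m, Li1 i)) : L1) ∈ Li1 t := by
      intro y hy
      obtain ⟨s, hsm, hmem⟩ := hfm y
      have hst : s ≤ t := hmax s ⟨y, hmem⟩ hsm
      rcases lt_or_eq_of_le hst with hlt | heq
      · exfalso
        have h1lt : ((f y : ↥(⋃ i ≤ m, Li1 i)) : L1) < ((f x0 : ↥(⋃ i ≤ m, Li1 i)) : L1) :=
          h1.mono s t hlt _ hmem _ hx0
        have h2lt : (f x0) < f y := f.strictMono hy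
        exact absurd h1lt (not_lt.mpr (le_of_lt h2lt))
      · exact heq ▸ hmem
    obtain ⟨i0, hx0i0⟩ : ∃ i, x0 ∈ Li0 i := mem_iUnion.mp (h0.union ▸ mem_univ x0)
    obtain ⟨G, hG⟩ := omegaSum_embed_tail Li0 h0 i0
    have hGgt : ∀ x : L0, x0 < G x := by
      intro x
      obtain ⟨i, hi, hmem⟩ := hG x
      exact h0.mono i0 i hi x0 hx0i0 _ hmem
    refine ⟨t, ⟨OrderEmbedding.ofStrictMono
      (fun x => (⟨((f (G x) : ↥(⋃ i ≤ m, Li1 i)) : L1), key _ (hGgt x)⟩ : ↥(Li1 t))) ?_⟩⟩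
    intro x y hxy
    exact Subtype.mk_lt_mk.mpr (f.strictMono (G.strictMono hxy))
end

section
/- Let L⁰ be a countable linear order that is the ω-sum of a sequence ⟨L⁰_i : i∈ω⟩ of members of ℋ satisfying condition (*), and let L¹ be a countable linear order that is the ω-sum of a sequence ⟨L¹_i : i∈ω⟩ of members of ℋ satisfying condition (*). If the lexicographic sum L⁰ + L¹ is not order-isomorphic to any member of ℋ, then there is no m∈ω such that L⁰ order-embeds into L¹_0 ∪ … ∪ L¹_m (with the induced order). -/
open Set

/-- Image of a set under an order embedding, as an order iso. -/
noncomputable def embImageIso {α β : Type*} [LinearOrder α] [LinearOrder β]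
    (f : α ↪o β) (s : Set α) : ↥s ≃o ↥(f '' s) where
  toEquiv := Equiv.Set.image f s f.injective
  map_rel_iff' := by
    rintro ⟨a, ha⟩ ⟨b, hb⟩
    simp [Equiv.Set.image, Equiv.Set.imageOfInjOn, f.le_iff_le]

lemma tail_embed {L : Type*} [LinearOrder L] {Li : ℕ → Set L}
    (h : IsOmegaSumH (univ : Set L) Li) (n : ℕ) :
    ∃ F : L → L, StrictMono F ∧ ∀ x : L, ∃ k, n < k ∧ F x ∈ Li k := by
  have hmem : ∀ x : L, ∃ i, x ∈ Li i := fun x =>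
    mem_iUnion.mp (h.union ▸ mem_univ x)
  choose idx hidx using hmem
  have hle : ∀ {x y : L}, x < y → idx x ≤ idx y := by
    intro x y hxy
    by_contra hc
    push_neg at hc
    exact absurd (h.mono _ _ hc _ (hidx y) _ (hidx x)) (not_lt.mpr hxy.le)
  have hstep : ∀ k b : ℕ, ∃ j, b < j ∧ Nonempty (↥(Li k) ↪o ↥(Li j)) := by
    intro k b
    obtain ⟨j, hj1, hj2⟩ := (h.star k).exists_gt b
    exact ⟨j, hj2, hj1⟩
  let jf : ℕ → ℕ := fun k => Nat.rec (Classical.choose (hstep 0 n))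
    (fun k ih => Classical.choose (hstep (k + 1) ih)) k
  have hjf0 : n < jf 0 ∧ Nonempty (↥(Li 0) ↪o ↥(Li (jf 0))) :=
    Classical.choose_spec (hstep 0 n)
  have hjfS : ∀ k, jf k < jf (k + 1) ∧ Nonempty (↥(Li (k + 1)) ↪o ↥(Li (jf (k + 1)))) :=
    fun k => Classical.choose_spec (hstep (k + 1) (jf k))
  have hmono : StrictMono jf := strictMono_nat_of_lt_succ fun k => (hjfS k).1
  have hgt : ∀ k, n < jf k := fun k => lt_of_lt_of_le hjf0.1 (hmono.monotone (Nat.zero_le k))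
  have hemb : ∀ k, Nonempty (↥(Li k) ↪o ↥(Li (jf k))) := by
    intro k
    cases k with
    | zero => exact hjf0.2
    | succ k => exact (hjfS k).2
  have g : ∀ k, ↥(Li k) ↪o ↥(Li (jf k)) := fun k => Classical.choice (hemb k)
  have gcongr : ∀ i j, i = j → ∀ (a : ↥(Li i)) (b : ↥(Li j)),
      (a : L) < (b : L) → ((g i a : L)) < ((g j b : L)) := by
    rintro i j rfl a b hab
    exact Subtype.coe_lt_coe.mpr ((g i).strictMono (Subtype.coe_lt_coe.mp hab))
  refine ⟨fun x => ↑(g (idx x) ⟨x, hidx x⟩), ?_, ?_⟩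
  · intro x y hxy
    rcases lt_or_eq_of_le (hle hxy) with hlt | heq
    · exact h.mono _ _ (hmono hlt) _ (g (idx x) ⟨x, hidx x⟩).2 _ (g (idx y) ⟨y, hidx y⟩).2
    · exact gcongr _ _ heq ⟨x, hidx x⟩ ⟨y, hidx y⟩ hxy
  · exact fun x => ⟨jf (idx x), hgt _, (g (idx x) ⟨x, hidx x⟩).2⟩

lemma embed_block {L0 L1 : Type*} [LinearOrder L0] [LinearOrder L1]
    {Li0 : ℕ → Set L0} (h0 : IsOmegaSumH (univ : Set L0) Li0)
    {Li1 : ℕ → Set L1} (h1 : IsOmegaSumH (univ : Set L1) Li1)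
    {m : ℕ} (f : L0 ↪o ↥(⋃ i ≤ m, Li1 i)) :
    ∃ i, Nonempty (L0 ↪o ↥(Li1 i)) := by
  have hmem : ∀ x : L0, ∃ i, i ≤ m ∧ (↑(f x) : L1) ∈ Li1 i := by
    intro x
    have h2 := (f x).2
    simp only [mem_iUnion, exists_prop] at h2
    exact h2
  choose φ hφm hφ using hmem
  have hφmono : ∀ {x y : L0}, x < y → φ x ≤ φ y := by
    intro x y hxy
    by_contra hc
    push_neg at hc
    have h3 : (↑(f y) : L1) < ↑(f x) := h1.mono _ _ hc _ (hφ y) _ (hφ x)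
    exact absurd (Subtype.coe_lt_coe.mpr (f.strictMono hxy)) (not_lt.mpr h3.le)
  obtain ⟨x00, _⟩ := h0.nonemp 0
  have hRne : (Set.range φ).Nonempty := ⟨φ x00, mem_range_self _⟩
  have hRb : BddAbove (Set.range φ) := ⟨m, by rintro _ ⟨x, rfl⟩; exact hφm x⟩
  obtain ⟨x0, hx0⟩ : sSup (Set.range φ) ∈ Set.range φ := Nat.sSup_mem hRne hRb
  set i' := sSup (Set.range φ) with hi'
  have hmax : ∀ x, φ x ≤ i' := fun x => le_csSup hRb (mem_range_self x)
  obtain ⟨nb, hnb⟩ : ∃ nb, x0 ∈ Li0 nb := mem_iUnion.mp (h0.union ▸ mem_univ x0)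
  obtain ⟨F, hFmono, hFblk⟩ := tail_embed h0 nb
  have hgt : ∀ x, x0 < F x := by
    intro x
    obtain ⟨k, hk, hmemk⟩ := hFblk x
    exact h0.mono nb k hk _ hnb _ hmemk
  have hin : ∀ x, (↑(f (F x)) : L1) ∈ Li1 i' := by
    intro x
    have heq : φ (F x) = i' := le_antisymm (hmax _) (hx0 ▸ hφmono (hgt x))
    exact heq ▸ hφ (F x)
  exact ⟨i', ⟨OrderEmbedding.ofStrictMono (fun x => ⟨↑(f (F x)), hin x⟩)
    (fun x y hxy => Subtype.mk_lt_mk.mpr (Subtype.coe_lt_coe.mpr (f.strictMono (hFmono hxy))))⟩⟩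

lemma inH_image {L : Type*} [LinearOrder L] {A : Set L} (h : SetInH A) (g : L ↪o ℚ) :
    InH (⇑g '' A) := by
  obtain ⟨Mq, hMq, ⟨iso0⟩⟩ := h
  exact InH.iso hMq ⟨iso0.symm.trans (embImageIso g A)⟩
/-- For `L⁰, L¹` countable linear orders which are ω-sums of
sequences of members of ℋ satisfying (*): if the lexicographic sum `L⁰ + L¹`
is not order-isomorphic to any member of ℋ, then there is no `m` with
`L⁰ ↪ L¹_0 ∪ ⋯ ∪ L¹_m`. -/
theorem stmt12 {L0 L1 : Type*} [LinearOrder L0] [LinearOrder L1]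
    [Countable L0] [Countable L1]
    (Li0 : ℕ → Set L0) (h0 : IsOmegaSumH (univ : Set L0) Li0)
    (Li1 : ℕ → Set L1) (h1 : IsOmegaSumH (univ : Set L1) Li1)
    (hnH : ¬ TypeInH (L0 ⊕ₗ L1)) :
    ¬ ∃ m : ℕ, Nonempty (L0 ↪o ↥(⋃ i ≤ m, Li1 i)) := by
  rintro ⟨m, ⟨f⟩⟩
  apply hnH
  obtain ⟨i', ⟨f0⟩⟩ := embed_block h0 h1 f
  haveI : Countable (L0 ⊕ₗ L1) := inferInstanceAs (Countable (L0 ⊕ L1))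
  obtain ⟨e⟩ : Nonempty ((L0 ⊕ₗ L1) ↪o ℚ) := Order.embedding_from_countable_to_dense (L0 ⊕ₗ L1) ℚ
  let einl : L0 ↪o (L0 ⊕ₗ L1) := OrderEmbedding.ofStrictMono (fun a => toLex (Sum.inl a))
    (fun a b hab => Sum.Lex.inl_lt_inl_iff.mpr hab)
  let einr : L1 ↪o (L0 ⊕ₗ L1) := OrderEmbedding.ofStrictMono (fun b => toLex (Sum.inr b))
    (fun a b hab => Sum.Lex.inr_lt_inr_iff.mpr hab)
  let g0 : L0 ↪o ℚ := einl.trans e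
  let g1 : L1 ↪o ℚ := einr.trans e
  let M : ℕ → Set ℚ := fun j => Nat.casesOn j (⇑g0 '' univ) (fun k => ⇑g1 '' Li1 k)
  haveI : Nonempty L0 := ⟨(h0.nonemp 0).choose⟩
  -- InH of the first block
  have hM0iso : ∀ i, Nonempty (↥(⇑g0 '' Li0 i) ≃o ↥(Li0 i)) :=
    fun i => ⟨(embImageIso g0 (Li0 i)).symm⟩
  have hM0 : InH (⇑g0 '' univ) := by
    have hU : (⋃ i, ⇑g0 '' Li0 i) = ⇑g0 '' univ := by
      rw [← image_iUnion, h0.union]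
    rw [← hU]
    refine InH.omegaSum (fun i => ⇑g0 '' Li0 i) (fun i => (h0.nonemp i).image _)
      (fun i => inH_image (h0.inH i) g0) ?_ ?_
    · intro i
      refine Set.Infinite.mono ?_ (h0.star i)
      intro j hj
      obtain ⟨emb⟩ := hj
      exact ⟨(((embImageIso g0 (Li0 i)).symm.toOrderEmbedding.trans emb).trans
        (embImageIso g0 (Li0 j)).toOrderEmbedding)⟩
    · rintro i j hij x ⟨a, ha, rfl⟩ y ⟨b, hb, rfl⟩
      exact g0.strictMono (h0.mono i j hij a ha b hb)
  -- the full union is (range e)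
  have hUnion : (⋃ j, M j) = ⇑e '' univ := by
    apply Set.eq_of_subset_of_subset
    · refine iUnion_subset fun j => ?_
      cases j with
      | zero =>
        rintro _ ⟨a, _, rfl⟩
        exact ⟨toLex (Sum.inl a), mem_univ _, rfl⟩
      | succ k =>
        rintro _ ⟨b, _, rfl⟩
        exact ⟨toLex (Sum.inr b), mem_univ _, rfl⟩
    · rintro _ ⟨w, _, rfl⟩
      rcases w with a | b
      · exact mem_iUnion.mpr ⟨0, ⟨a, mem_univ _, rfl⟩⟩
      · obtain ⟨k, hk⟩ : ∃ k, b ∈ Li1 k := mem_iUnion.mp (h1.union ▸ mem_univ b)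
        exact mem_iUnion.mpr ⟨k + 1, ⟨b, hk, rfl⟩⟩
  -- InH of the union
  have hInH : InH (⋃ j, M j) := by
    refine InH.omegaSum M ?_ ?_ ?_ ?_
    · intro i
      cases i with
      | zero => exact (univ_nonempty).image _
      | succ k => exact (h1.nonemp k).image _
    · intro i
      cases i with
      | zero => exact hM0
      | succ k => exact inH_image (h1.inH k) g1
    · intro i
      cases i with
      | zero =>
        -- M 0 embeds into M (j+1) for every j with Li1 i' ↪ Li1 j
        have hsub : (fun j => j + 1) '' {j | Nonempty (↥(Li1 i') ↪o ↥(Li1 j))} ⊆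
            {j | Nonempty (↥(M 0) ↪o ↥(M j))} := by
          rintro _ ⟨j, ⟨emb⟩, rfl⟩
          have e1 : ↥(M 0) ≃o L0 :=
            (embImageIso g0 univ).symm.trans OrderIso.Set.univ
          have e2 : ↥(Li1 j) ≃o ↥(M (j + 1)) := embImageIso g1 (Li1 j)
          exact ⟨((e1.toOrderEmbedding.trans f0).trans emb).trans e2.toOrderEmbedding⟩
        exact Set.Infinite.mono hsub
          (((h1.star i').image (fun a _ b _ h => Nat.succ_injective h)))
      | succ k =>
        have hsub : (fun j => j + 1) '' {j | Nonempty (↥(Li1 k) ↪o ↥(Li1 j))} ⊆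
            {j | Nonempty (↥(M (k + 1)) ↪o ↥(M j))} := by
          rintro _ ⟨j, ⟨emb⟩, rfl⟩
          exact ⟨((embImageIso g1 (Li1 k)).symm.toOrderEmbedding.trans emb).trans
            (embImageIso g1 (Li1 j)).toOrderEmbedding⟩
        exact Set.Infinite.mono hsub
          (((h1.star k).image (fun a _ b _ h => Nat.succ_injective h)))
    · intro i j hij
      cases i with
      | zero =>
        cases j with
        | zero => exact absurd hij (lt_irrefl 0)
        | succ l =>
          rintro _ ⟨a, _, rfl⟩ _ ⟨b, _, rfl⟩
          exact e.strictMono (Sum.Lex.inl_lt_inr a b)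
      | succ k =>
        cases j with
        | zero => exact absurd hij (Nat.not_lt_zero _).elim
        | succ l =>
          rintro _ ⟨a, ha, rfl⟩ _ ⟨b, hb, rfl⟩
          exact g1.strictMono (h1.mono k l (Nat.succ_lt_succ_iff.mp hij) a ha b hb)
  refine ⟨⋃ j, M j, hInH, ?_⟩
  have isoe : (L0 ⊕ₗ L1) ≃o ↥(⇑e '' univ) :=
    OrderIso.Set.univ.symm.trans (embImageIso e univ)
  exact ⟨isoe.trans (OrderIso.setCongr _ _ hUnion.symm)⟩
end
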